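/- arXiv:2005.07838 — 7 statements merged into one kernel-verified Lean document; each statement's English description precedes it below -/
import Mathlib

section
/- Let η ≥ 0, K > 0, and d > 0 with Kd ≤ 1. Define g_d(t) = (η + d) − (1 + Kd)t + (3K/2)t². If g_d has a real root, then its smallest real root t*_d satisfies 0 < t*_d ≤ (1/K)(1 − 1/√3). -/
theorem stmt_4
    (η K d : ℝ) (hη : 0 ≤ η) (hK : 0 < K) (hd : 0 < d) (hKd : K * d ≤ 1)
    (t : ℝ)
    (hroot : (η + d) - (1 + K * d) * t + 3 * K / 2 * t ^ 2 = 0)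
    (hsmallest : ∀ s : ℝ, (η + d) - (1 + K * d) * s + 3 * K / 2 * s ^ 2 = 0 → t ≤ s) :
    0 < t ∧ t ≤ (1 / K) * (1 - 1 / Real.sqrt 3) := by
  have h3 : Real.sqrt 3 ^ 2 = 3 := Real.sq_sqrt (by norm_num)
  have h3pos : (1:ℝ) < Real.sqrt 3 := by nlinarith [Real.sqrt_nonneg 3]
  have ht0 : 0 < t := by nlinarith [sq_nonneg t, mul_pos hK hd]
  have hD : (3*K*t - (1 + K*d))^2 = (1 + K*d)^2 - 6*K*(η+d) := by nlinarith [hroot]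
  have hDnn : 0 ≤ (1 + K*d)^2 - 6*K*(η+d) := hD ▸ sq_nonneg _
  set q := Real.sqrt ((1 + K*d)^2 - 6*K*(η+d)) with hq
  have hsqD : q ^ 2 = (1 + K*d)^2 - 6*K*(η+d) := Real.sq_sqrt hDnn
  have hqnn : 0 ≤ q := Real.sqrt_nonneg _
  have hroot2 : (η + d) - (1 + K * d) * ((1 + K*d - q)/(3*K)) +
      3 * K / 2 * ((1 + K*d - q)/(3*K)) ^ 2 = 0 := by
    field_simp
    nlinarith [hsqD]
  have ht := hsmallest _ hroot2
  -- x := K*d ≤ 2 - √3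
  have hx : K * d ≤ 2 - Real.sqrt 3 := by
    nlinarith [hDnn, mul_pos hK hd, mul_nonneg hK.le hη, sq_nonneg (Real.sqrt 3 - 1)]
  refine ⟨ht0, le_trans ht ?_⟩
  rw [div_le_iff₀ (by positivity)]
  have h1 : (1 / K) * (1 - 1 / Real.sqrt 3) * (3 * K) = 3 - Real.sqrt 3 := by
    field_simp
    nlinarith [h3]
  rw [h1]
  nlinarith [hqnn, hx]
end

section
/- Under the hypotheses of the inexact Newton theorem — f : U → Y differentiable, x₀ ∈ U, B̄(x₀,R) ⊆ U, Df(x₀) invertible with bounded inverse, ‖Df(x₀)⁻¹f(x₀)‖ ≤ η, ‖Df(x₀)⁻¹(Df(x) − Df(y))‖ ≤ K‖x−y‖ on B̄(x₀,R), d > 0 with Kd ≤ 1, and g_d(t) = (η+d) − (1+Kd)t + (3K/2)t² having smallest real root t* ≤ R — the function f has a unique zero x* in B̄(x₀, t*). -/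
/-!
Zeros of `f` are the fixed points of the simplified Newton map `L x = x - Df(x₀)⁻¹ f x`, whose
derivative `Df(x₀)⁻¹ (Df(x₀) - Df(x))` has norm at most `K t` on `B̄(x₀, t)`. Since `t` is the
smallest root of `g_d`, it lies left of the vertex of `g_d`, which gives `K t < 1` and
`η + K t² ≤ t`; hence `L` is a contraction of `B̄(x₀, t)` into itself and the Banach fixed point
theorem applies.
-/

open Metric Set
open scoped NNReal

theorem exists_unique_fixedPoint_mem_closedBall {α : Type*} [MetricSpace α] [CompleteSpace α]
    {L : α → α} {x₀ : α} {r : ℝ} {q : ℝ≥0} (hq : q < 1)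
    (hL : LipschitzOnWith q L (closedBall x₀ r)) (hx₀ : dist (L x₀) x₀ + q * r ≤ r) :
    ∃! x, x ∈ closedBall x₀ r ∧ L x = x := by
  have hr : 0 ≤ r := by nlinarith [dist_nonneg (x := L x₀) (y := x₀), q.2, (NNReal.coe_lt_coe.2 hq)]
  have hx₀r : x₀ ∈ closedBall x₀ r := mem_closedBall_self hr
  have hmaps : MapsTo L (closedBall x₀ r) (closedBall x₀ r) := fun x hx => by
    have hLx := hL.dist_le_mul x hx x₀ hx₀r
    have hqx : (q : ℝ) * dist x x₀ ≤ q * r := mul_le_mul_of_nonneg_left (mem_closedBall.1 hx) q.2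
    exact mem_closedBall.2 ((dist_triangle _ (L x₀) _).trans (by linarith))
  have hcontr : ContractingWith q (hmaps.restrict L _ _) := ⟨hq, hL.mapsToRestrict hmaps⟩
  obtain ⟨x, hx, hLx, -⟩ :=
    hcontr.exists_fixedPoint' isClosed_closedBall.isComplete hmaps hx₀r (edist_ne_top _ _)
  refine ⟨x, ⟨hx, hLx⟩, fun y ⟨hy, hLy⟩ => ?_⟩
  have : (⟨y, hy⟩ : closedBall x₀ r) = ⟨x, hx⟩ :=
    hcontr.fixedPoint_unique' (Subtype.ext hLy) (Subtype.ext hLx)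
  exact congrArg Subtype.val this

theorem lipschitzOnWith_sub_symm_apply {X Y : Type*} [NormedAddCommGroup X] [NormedSpace ℝ X]
    [NormedAddCommGroup Y] [NormedSpace ℝ Y] {f : X → Y} {f' : X → X →L[ℝ] Y} {s : Set X}
    (hs : Convex ℝ s) (hf : ∀ x ∈ s, HasFDerivAt f (f' x) x) (e₀ : X ≃L[ℝ] Y) {x₀ : X}
    (he₀ : (e₀ : X →L[ℝ] Y) = f' x₀) {C : ℝ≥0}
    (hC : ∀ x ∈ s, ‖(e₀.symm : Y →L[ℝ] X).comp (f' x₀ - f' x)‖ ≤ C) :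
    LipschitzOnWith C (fun x => x - e₀.symm (f x)) s := by
  refine hs.lipschitzOnWith_of_nnnorm_hasFDerivWithin_le (fun x hx => ?_) hC
  have hderiv := (hasFDerivAt_id x).sub ((e₀.symm : Y →L[ℝ] X).hasFDerivAt.comp x (hf x hx))
  have hid : ContinuousLinearMap.id ℝ X - (e₀.symm : Y →L[ℝ] X).comp (f' x)
      = (e₀.symm : Y →L[ℝ] X).comp (f' x₀ - f' x) := by
    ext v
    simp [← he₀]
  exact (hid ▸ hderiv).hasFDerivWithinAt

theorem pos_of_newton_quadratic_root {η K d t : ℝ} (hη : 0 ≤ η) (hK : 0 < K) (hd : 0 < d)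
    (hroot : (η + d) - (1 + K * d) * t + 3 * K / 2 * t ^ 2 = 0) : 0 < t := by
  by_contra! ht
  nlinarith [mul_nonneg (by positivity : (0 : ℝ) ≤ 1 + K * d) (neg_nonneg.2 ht),
    mul_nonneg hK.le (sq_nonneg t)]

/-- The roots of `g_d` are symmetric about its vertex `(1 + K d) / (3 K)`. -/
theorem three_mul_le_of_newton_quadratic_smallest_root {η K d t : ℝ} (hK : 0 < K)
    (hroot : (η + d) - (1 + K * d) * t + 3 * K / 2 * t ^ 2 = 0)
    (hsmallest : ∀ s : ℝ, (η + d) - (1 + K * d) * s + 3 * K / 2 * s ^ 2 = 0 → t ≤ s) :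
    3 * K * t ≤ 1 + K * d := by
  have hmirror : (η + d) - (1 + K * d) * (2 * (1 + K * d) / (3 * K) - t)
      + 3 * K / 2 * (2 * (1 + K * d) / (3 * K) - t) ^ 2 = 0 := by
    field_simp
    linear_combination (6 * K) * hroot
  have h := hsmallest _ hmirror
  rw [le_sub_iff_add_le, ← two_mul, le_div_iff₀ (by positivity)] at h
  linarith

theorem stmt_9_general
    {X Y : Type*} [NormedAddCommGroup X] [NormedSpace ℝ X] [CompleteSpace X]
    [NormedAddCommGroup Y] [NormedSpace ℝ Y]
    (U : Set X) (f : X → Y) (f' : X → (X →L[ℝ] Y))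
    (hf : ∀ x ∈ U, HasFDerivAt f (f' x) x)
    (x₀ : X) (R : ℝ)
    (hball : Metric.closedBall x₀ R ⊆ U)
    (e₀ : X ≃L[ℝ] Y) (he₀ : (e₀ : X →L[ℝ] Y) = f' x₀)
    (η K d : ℝ) (hη : 0 ≤ η) (hK : 0 < K) (hd : 0 < d) (hKd : K * d ≤ 1)
    (hη₀ : ‖e₀.symm (f x₀)‖ ≤ η)
    (hLip : ∀ x ∈ Metric.closedBall x₀ R, ∀ y ∈ Metric.closedBall x₀ R,
      ‖(e₀.symm : Y →L[ℝ] X).comp (f' x - f' y)‖ ≤ K * ‖x - y‖)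
    (t : ℝ)
    (hroot : (η + d) - (1 + K * d) * t + 3 * K / 2 * t ^ 2 = 0)
    (hsmallest : ∀ s : ℝ, (η + d) - (1 + K * d) * s + 3 * K / 2 * s ^ 2 = 0 → t ≤ s)
    (htR : t ≤ R) :
    ∃! x : X, x ∈ Metric.closedBall x₀ t ∧ f x = 0 := by
  have ht : 0 < t := pos_of_newton_quadratic_root hη hK hd hroot
  have hvertex := three_mul_le_of_newton_quadratic_smallest_root hK hroot hsmallest
  have hKt : K * t < 1 := by linarith
  have hBR : closedBall x₀ t ⊆ closedBall x₀ R := closedBall_subset_closedBall htR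
  have hx₀R : x₀ ∈ closedBall x₀ R := hBR (mem_closedBall_self ht.le)
  let q : ℝ≥0 := ⟨K * t, by positivity⟩
  have hL : LipschitzOnWith q (fun x => x - e₀.symm (f x)) (closedBall x₀ t) := by
    refine lipschitzOnWith_sub_symm_apply (convex_closedBall x₀ t)
      (fun x hx => hf x (hball (hBR hx))) e₀ he₀ fun x hx => ?_
    calc ‖(e₀.symm : Y →L[ℝ] X).comp (f' x₀ - f' x)‖ ≤ K * ‖x₀ - x‖ := hLip _ hx₀R _ (hBR hx)
      _ ≤ K * t := by gcongr; rw [← dist_eq_norm']; exact mem_closedBall.1 hx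
  have hstart : dist (x₀ - e₀.symm (f x₀)) x₀ + q * t ≤ t := by
    rw [dist_eq_norm, sub_sub_cancel_left, norm_neg]
    change _ + K * t * t ≤ t
    nlinarith [mul_nonneg hd.le (sub_nonneg.2 hKt.le), mul_nonneg hK.le (sq_nonneg t)]
  refine (existsUnique_congr fun x => and_congr_right' ?_).2
    (exists_unique_fixedPoint_mem_closedBall (show q < 1 from hKt) hL hstart)
  rw [sub_eq_self, e₀.symm.map_eq_zero_iff]

theorem stmt_9
    {X Y : Type*} [NormedAddCommGroup X] [NormedSpace ℝ X] [CompleteSpace X]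
    [NormedAddCommGroup Y] [NormedSpace ℝ Y] [CompleteSpace Y]
    (U : Set X) (hU : IsOpen U) (f : X → Y) (f' : X → (X →L[ℝ] Y))
    (hf : ∀ x ∈ U, HasFDerivAt f (f' x) x)
    (x₀ : X) (hx₀ : x₀ ∈ U) (R : ℝ) (hR : 0 < R)
    (hball : Metric.closedBall x₀ R ⊆ U)
    (e₀ : X ≃L[ℝ] Y) (he₀ : (e₀ : X →L[ℝ] Y) = f' x₀)
    (η K d : ℝ) (hη : 0 ≤ η) (hK : 0 < K) (hd : 0 < d) (hKd : K * d ≤ 1)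
    (hη₀ : ‖e₀.symm (f x₀)‖ ≤ η)
    (hLip : ∀ x ∈ Metric.closedBall x₀ R, ∀ y ∈ Metric.closedBall x₀ R,
      ‖(e₀.symm : Y →L[ℝ] X).comp (f' x - f' y)‖ ≤ K * ‖x - y‖)
    (t : ℝ)
    (hroot : (η + d) - (1 + K * d) * t + 3 * K / 2 * t ^ 2 = 0)
    (hsmallest : ∀ s : ℝ, (η + d) - (1 + K * d) * s + 3 * K / 2 * s ^ 2 = 0 → t ≤ s)
    (htR : t ≤ R) :
    ∃! x : X, x ∈ Metric.closedBall x₀ t ∧ f x = 0 :=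
  stmt_9_general U f f' hf x₀ R hball e₀ he₀ η K d hη hK hd hKd hη₀ hLip t hroot hsmallest htR
end

section
/- Under the hypotheses of the inexact Newton theorem (as above), with t* the smallest root of g_d, the following invariance holds: for every z ∈ B̄(x₀, t*), Df(z) is invertible and for every r ∈ X with ‖r‖ ≤ d, the point z − Df(z)⁻¹f(z) + r lies in B̄(x₀, t*). Consequently, any sequence x_{k+1} = x_k − Df(x_k)⁻¹f(x_k) + r_k with x_0 = x₀ and ‖r_k‖ ≤ d remains in B̄(x₀, t*) with Df(x_k) invertible for all k. -/
/-!
Transport everything to `X` by `e₀⁻¹ = Df(x₀)⁻¹`: put `F = e₀⁻¹ ∘ f` and `A = e₀⁻¹ ∘ Df`, so that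
`A x₀ = 1` and `A` is `K`-Lipschitz. For `z` in the ball, `‖1 - A z‖ ≤ K‖z - x₀‖ ≤ K t* < 1`, so
`A z` is invertible (Neumann series) and `‖A z p‖ ≥ (1 - K t*)‖p‖`. The displacement
`p = z - (A z)⁻¹ F z - x₀` of the Newton step satisfies
`A z p = (F x₀ - F z - A z (x₀ - z)) - F x₀`, of norm at most `K/2 ‖z - x₀‖² + η` by the quadratic
Taylor bound. As `g_d(t*) = 0` reads `η + K/2 t*² = (1 - K t*)(t* - d)`, this gives
`‖p‖ ≤ t* - d`, leaving room for a perturbation of norm `d`.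

That `K t* < 1` comes from `t*` being the smaller root: `g_d` is symmetric about its vertex
`(1 + Kd)/(3K)`, so `t* ≤ (1 + Kd)/(3K) ≤ 2/(3K)`.
-/

open Metric Set

theorem ContinuousLinearMap.one_sub_mul_norm_le_norm_apply {𝕜 X : Type*}
    [NontriviallyNormedField 𝕜] [NormedAddCommGroup X] [NormedSpace 𝕜 X] {A : X →L[𝕜] X}
    {q : ℝ} (hA : ‖1 - A‖ ≤ q) (p : X) : (1 - q) * ‖p‖ ≤ ‖A p‖ := by
  have h₁ : ‖(1 - A) p‖ ≤ q * ‖p‖ :=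
    ((1 - A).le_opNorm p).trans (mul_le_mul_of_nonneg_right hA (norm_nonneg p))
  have h₂ : ‖p‖ ≤ ‖(1 - A) p‖ + ‖A p‖ := by
    simpa using norm_add_le ((1 - A) p) (A p)
  linarith

theorem ContinuousLinearEquiv.exists_coe_eq_of_norm_one_sub_lt {𝕜 X Y : Type*}
    [NontriviallyNormedField 𝕜] [NormedAddCommGroup X] [NormedSpace 𝕜 X] [CompleteSpace X]
    [NormedAddCommGroup Y] [NormedSpace 𝕜 Y] (e₀ : X ≃L[𝕜] Y) {T : X →L[𝕜] Y}
    (h : ‖1 - (e₀.symm : Y →L[𝕜] X).comp T‖ < 1) : ∃ e : X ≃L[𝕜] Y, (e : X →L[𝕜] Y) = T :=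
  ⟨(ContinuousLinearEquiv.ofUnit (Units.oneSub _ h)).trans e₀, by
    ext x
    change e₀ ((1 - (1 - (e₀.symm : Y →L[𝕜] X).comp T)) x) = T x
    simp⟩

noncomputable def inexactNewtonMajorant (η K d s : ℝ) : ℝ :=
  (η + d) - (1 + K * d) * s + 3 * K / 2 * s ^ 2

theorem inexactNewtonMajorant_eq (η K d s : ℝ) :
    inexactNewtonMajorant η K d s = η + K / 2 * s ^ 2 - (1 - K * s) * (s - d) := by
  unfold inexactNewtonMajorant; ring

theorem inexactNewtonMajorant_reflect {η K : ℝ} (hK : K ≠ 0) (d s : ℝ) :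
    inexactNewtonMajorant η K d (2 * (1 + K * d) / (3 * K) - s) =
      inexactNewtonMajorant η K d s := by
  unfold inexactNewtonMajorant; field_simp; ring

theorem pos_of_inexactNewtonMajorant_eq_zero {η K d t : ℝ} (hK : 0 ≤ K) (hd : 0 ≤ d)
    (hηd : 0 < η + d) (ht : inexactNewtonMajorant η K d t = 0) : 0 < t := by
  unfold inexactNewtonMajorant at ht
  by_contra! ht₀
  nlinarith [mul_nonneg hK hd, mul_nonneg hK (sq_nonneg t)]

theorem three_mul_mul_le_of_isLeast {η K d t : ℝ} (hK : 0 < K)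
    (ht : IsLeast {s | inexactNewtonMajorant η K d s = 0} t) : 3 * K * t ≤ 1 + K * d := by
  have hle : t ≤ 2 * (1 + K * d) / (3 * K) - t :=
    ht.2 <| show _ = 0 by rw [inexactNewtonMajorant_reflect hK.ne']; exact ht.1
  rw [le_sub_iff_add_le, le_div_iff₀ (by positivity)] at hle
  linarith

section Newton

variable {X Y : Type*} [NormedAddCommGroup X] [NormedSpace ℝ X]
  [NormedAddCommGroup Y] [NormedSpace ℝ Y]

theorem norm_image_sub_sub_fderiv_le_of_segment {f : X → Y} {f' : X → X →L[ℝ] Y} {a b : X}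
    {K : ℝ} (hf : ∀ x ∈ segment ℝ a b, HasFDerivAt f (f' x) x)
    (hf' : ∀ x ∈ segment ℝ a b, ‖f' x - f' a‖ ≤ K * ‖x - a‖) :
    ‖f b - f a - f' a (b - a)‖ ≤ K / 2 * ‖b - a‖ ^ 2 := by
  set v := b - a
  let g : ℝ → Y := fun s => f (a + s • v) - s • f' a v - f a
  have hseg : ∀ s ∈ Icc (0 : ℝ) 1, a + s • v ∈ segment ℝ a b := fun s hs => by
    rw [segment_eq_image']; exact ⟨s, hs, rfl⟩
  have hg : ∀ s ∈ Icc (0 : ℝ) 1, HasDerivAt g (f' (a + s • v) v - f' a v) s := by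
    intro s hs
    have hline : HasDerivAt (fun s : ℝ => a + s • v) v s := by
      simpa using ((hasDerivAt_id s).smul_const v).const_add a
    exact (((hf _ (hseg s hs)).comp_hasDerivAt s hline).sub
      (by simpa using (hasDerivAt_id s).smul_const (f' a v))).sub_const (f a)
  have hB : ∀ s : ℝ,
      HasDerivAt (fun s => K / 2 * s ^ 2 * ‖v‖ ^ 2) (K * s * ‖v‖ ^ 2) s := fun s =>
    (((hasDerivAt_pow 2 s).const_mul (K / 2)).mul_const (‖v‖ ^ 2)).congr_deriv (by ring)
  have hbound : ∀ s ∈ Ico (0 : ℝ) 1, ‖f' (a + s • v) v - f' a v‖ ≤ K * s * ‖v‖ ^ 2 := by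
    intro s hs
    calc ‖f' (a + s • v) v - f' a v‖ = ‖(f' (a + s • v) - f' a) v‖ := rfl
      _ ≤ ‖f' (a + s • v) - f' a‖ * ‖v‖ := ContinuousLinearMap.le_opNorm _ _
      _ ≤ K * ‖s • v‖ * ‖v‖ := by
        gcongr; simpa using hf' _ (hseg s (Ico_subset_Icc_self hs))
      _ = K * s * ‖v‖ ^ 2 := by rw [norm_smul, Real.norm_of_nonneg hs.1]; ring
  have hg1 := image_norm_le_of_norm_deriv_right_le_deriv_boundary
    (fun s hs => (hg s hs).continuousAt.continuousWithinAt)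
    (fun s hs => (hg s (Ico_subset_Icc_self hs)).hasDerivWithinAt) (by simp [g]) hB hbound
    (right_mem_Icc.2 zero_le_one)
  convert hg1 using 1
  · simp only [g, v, one_smul, add_sub_cancel]; rw [sub_right_comm]
  · ring

theorem norm_newton_step_sub_le {F : X → X} {A : X → X →L[ℝ] X} {x₀ z p : X} {K : ℝ}
    (hF : ∀ x ∈ segment ℝ z x₀, HasFDerivAt F (A x) x)
    (hA : ∀ x ∈ segment ℝ z x₀, ‖A x - A z‖ ≤ K * ‖x - z‖) (hA₀ : A x₀ = 1)
    (hp : A z p = A z (z - x₀) - F z) :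
    (1 - K * ‖z - x₀‖) * ‖p‖ ≤ ‖F x₀‖ + K / 2 * ‖z - x₀‖ ^ 2 := by
  have hAz : ‖1 - A z‖ ≤ K * ‖z - x₀‖ := by
    rw [← hA₀, norm_sub_rev z]; exact hA x₀ (right_mem_segment ℝ z x₀)
  calc (1 - K * ‖z - x₀‖) * ‖p‖ ≤ ‖A z p‖ := (A z).one_sub_mul_norm_le_norm_apply hAz p
    _ = ‖(F x₀ - F z - A z (x₀ - z)) - F x₀‖ := by
      rw [hp, map_sub, map_sub]; congr 1; abel
    _ ≤ ‖F x₀ - F z - A z (x₀ - z)‖ + ‖F x₀‖ := norm_sub_le _ _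
    _ ≤ K / 2 * ‖x₀ - z‖ ^ 2 + ‖F x₀‖ := by
      gcongr; exact norm_image_sub_sub_fderiv_le_of_segment hF hA
    _ = ‖F x₀‖ + K / 2 * ‖z - x₀‖ ^ 2 := by rw [norm_sub_rev]; ring

def InexactNewtonInvariant (f : X → Y) (f' : X → X →L[ℝ] Y) (d : ℝ) (S : Set X) : Prop :=
  ∀ z ∈ S, ∃ ez : X ≃L[ℝ] Y, (ez : X →L[ℝ] Y) = f' z ∧
    ∀ r : X, ‖r‖ ≤ d → z - ez.symm (f z) + r ∈ S

theorem InexactNewtonInvariant.iterate_mem {f : X → Y} {f' : X → X →L[ℝ] Y} {d : ℝ}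
    {S : Set X} (hS : InexactNewtonInvariant f f' d S) {x rs : ℕ → X} (h₀ : x 0 ∈ S)
    (hrs : ∀ k, ‖rs k‖ ≤ d)
    (hx : ∀ k, ∀ ek : X ≃L[ℝ] Y, (ek : X →L[ℝ] Y) = f' (x k) →
      x (k + 1) = x k - ek.symm (f (x k)) + rs k) (k : ℕ) : x k ∈ S := by
  induction k with
  | zero => exact h₀
  | succ k ih =>
    obtain ⟨ek, hek, hstep⟩ := hS _ ih
    rw [hx k ek hek]
    exact hstep _ (hrs k)

theorem inexactNewtonInvariant_closedBall [CompleteSpace X] {f : X → Y}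
    {f' : X → X →L[ℝ] Y} {x₀ : X} {e₀ : X ≃L[ℝ] Y} {η K d t : ℝ}
    (hf : ∀ x ∈ closedBall x₀ t, HasFDerivAt f (f' x) x) (he₀ : (e₀ : X →L[ℝ] Y) = f' x₀)
    (hη₀ : ‖e₀.symm (f x₀)‖ ≤ η)
    (hLip : ∀ x ∈ closedBall x₀ t, ∀ y ∈ closedBall x₀ t,
      ‖(e₀.symm : Y →L[ℝ] X).comp (f' x - f' y)‖ ≤ K * ‖x - y‖)
    (hK : 0 ≤ K) (hKt : K * t < 1) (hmaj : η + K / 2 * t ^ 2 ≤ (1 - K * t) * (t - d)) :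
    InexactNewtonInvariant f f' d (closedBall x₀ t) := by
  intro z hz
  let A : X → X →L[ℝ] X := fun x => (e₀.symm : Y →L[ℝ] X).comp (f' x)
  have hA₀ : A x₀ = 1 := by ext; simp [A, ← he₀]
  have hA : ∀ x ∈ closedBall x₀ t, ‖A x - A z‖ ≤ K * ‖x - z‖ := fun x hx => by
    simpa [A, ContinuousLinearMap.comp_sub] using hLip x hx z hz
  have hx₀ : x₀ ∈ closedBall x₀ t := mem_closedBall_self (nonempty_closedBall.1 ⟨z, hz⟩)
  have hseg : segment ℝ z x₀ ⊆ closedBall x₀ t := (convex_closedBall x₀ t).segment_subset hz hx₀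
  have hzt : ‖z - x₀‖ ≤ t := mem_closedBall_iff_norm.1 hz
  obtain ⟨ez, hez⟩ := e₀.exists_coe_eq_of_norm_one_sub_lt (T := f' z) <|
    calc ‖1 - A z‖ = ‖A x₀ - A z‖ := by rw [hA₀]
      _ ≤ K * ‖x₀ - z‖ := hA x₀ hx₀
      _ ≤ K * t := by rw [norm_sub_rev]; gcongr
      _ < 1 := hKt
  refine ⟨ez, hez, fun r hr => ?_⟩
  set p := z - ez.symm (f z) - x₀
  have hp : A z p = A z (z - x₀) - e₀.symm (f z) := by
    have : f' z (ez.symm (f z)) = f z := by rw [← hez]; simp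
    simp [A, p, this, sub_right_comm]
  have hstep := norm_newton_step_sub_le (F := fun x => e₀.symm (f x))
    (fun x hx => (e₀.symm : Y →L[ℝ] X).hasFDerivAt.comp x (hf x (hseg hx)))
    (fun x hx => hA x (hseg hx)) hA₀ hp
  have hpt : ‖p‖ ≤ t - d := by
    refine le_of_mul_le_mul_left ?_ (sub_pos.2 hKt)
    calc (1 - K * t) * ‖p‖ ≤ (1 - K * ‖z - x₀‖) * ‖p‖ := by gcongr
      _ ≤ ‖e₀.symm (f x₀)‖ + K / 2 * ‖z - x₀‖ ^ 2 := hstep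
      _ ≤ η + K / 2 * t ^ 2 := by gcongr
      _ ≤ (1 - K * t) * (t - d) := hmaj
  rw [mem_closedBall_iff_norm, show z - ez.symm (f z) + r - x₀ = p + r by simp only [p]; abel]
  linarith [norm_add_le p r]

end Newton

theorem stmt_10_general
    {X Y : Type*} [NormedAddCommGroup X] [NormedSpace ℝ X] [CompleteSpace X]
    [NormedAddCommGroup Y] [NormedSpace ℝ Y]
    (U : Set X) (f : X → Y) (f' : X → (X →L[ℝ] Y))
    (hf : ∀ x ∈ U, HasFDerivAt f (f' x) x)
    (x₀ : X) (R : ℝ)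
    (hball : Metric.closedBall x₀ R ⊆ U)
    (e₀ : X ≃L[ℝ] Y) (he₀ : (e₀ : X →L[ℝ] Y) = f' x₀)
    (η K d : ℝ) (hK : 0 < K) (hd : 0 < d) (hKd : K * d ≤ 1)
    (hη₀ : ‖e₀.symm (f x₀)‖ ≤ η)
    (hLip : ∀ x ∈ Metric.closedBall x₀ R, ∀ y ∈ Metric.closedBall x₀ R,
      ‖(e₀.symm : Y →L[ℝ] X).comp (f' x - f' y)‖ ≤ K * ‖x - y‖)
    (t : ℝ)
    (hroot : (η + d) - (1 + K * d) * t + 3 * K / 2 * t ^ 2 = 0)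
    (hsmallest : ∀ s : ℝ, (η + d) - (1 + K * d) * s + 3 * K / 2 * s ^ 2 = 0 → t ≤ s)
    (htR : t ≤ R) :
    (∀ z ∈ Metric.closedBall x₀ t, ∃ ez : X ≃L[ℝ] Y, (ez : X →L[ℝ] Y) = f' z ∧
      ∀ r : X, ‖r‖ ≤ d → z - ez.symm (f z) + r ∈ Metric.closedBall x₀ t) ∧
    (∀ (x rs : ℕ → X), x 0 = x₀ → (∀ k, ‖rs k‖ ≤ d) →
      (∀ k, ∀ ek : X ≃L[ℝ] Y, (ek : X →L[ℝ] Y) = f' (x k) →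
        x (k + 1) = x k - ek.symm (f (x k)) + rs k) →
      ∀ k, x k ∈ Metric.closedBall x₀ t ∧
        ∃ ek : X ≃L[ℝ] Y, (ek : X →L[ℝ] Y) = f' (x k)) := by
  have ht : IsLeast {s | inexactNewtonMajorant η K d s = 0} t := ⟨hroot, hsmallest⟩
  have ht₀ : 0 < t := pos_of_inexactNewtonMajorant_eq_zero hK.le hd.le
    (by linarith [(norm_nonneg _).trans hη₀]) hroot
  have hKt : K * t < 1 := by linarith [three_mul_mul_le_of_isLeast hK ht]
  have hmaj : η + K / 2 * t ^ 2 = (1 - K * t) * (t - d) :=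
    sub_eq_zero.1 ((inexactNewtonMajorant_eq η K d t).symm.trans hroot)
  have hsub : closedBall x₀ t ⊆ closedBall x₀ R := closedBall_subset_closedBall htR
  have hinv : InexactNewtonInvariant f f' d (closedBall x₀ t) :=
    inexactNewtonInvariant_closedBall (fun x hx => hf x (hball (hsub hx))) he₀ hη₀
      (fun x hx y hy => hLip x (hsub hx) y (hsub hy)) hK.le hKt hmaj.le
  refine ⟨hinv, fun x rs hx0 hrs hx k => ?_⟩
  have hk := hinv.iterate_mem (hx0 ▸ mem_closedBall_self ht₀.le) hrs hx k
  exact ⟨hk, (hinv _ hk).imp fun _ h => h.1⟩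

theorem stmt_10
    {X Y : Type*} [NormedAddCommGroup X] [NormedSpace ℝ X] [CompleteSpace X]
    [NormedAddCommGroup Y] [NormedSpace ℝ Y] [CompleteSpace Y]
    (U : Set X) (hU : IsOpen U) (f : X → Y) (f' : X → (X →L[ℝ] Y))
    (hf : ∀ x ∈ U, HasFDerivAt f (f' x) x)
    (x₀ : X) (hx₀ : x₀ ∈ U) (R : ℝ) (hR : 0 < R)
    (hball : Metric.closedBall x₀ R ⊆ U)
    (e₀ : X ≃L[ℝ] Y) (he₀ : (e₀ : X →L[ℝ] Y) = f' x₀)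
    (η K d : ℝ) (hη : 0 ≤ η) (hK : 0 < K) (hd : 0 < d) (hKd : K * d ≤ 1)
    (hη₀ : ‖e₀.symm (f x₀)‖ ≤ η)
    (hLip : ∀ x ∈ Metric.closedBall x₀ R, ∀ y ∈ Metric.closedBall x₀ R,
      ‖(e₀.symm : Y →L[ℝ] X).comp (f' x - f' y)‖ ≤ K * ‖x - y‖)
    (t : ℝ)
    (hroot : (η + d) - (1 + K * d) * t + 3 * K / 2 * t ^ 2 = 0)
    (hsmallest : ∀ s : ℝ, (η + d) - (1 + K * d) * s + 3 * K / 2 * s ^ 2 = 0 → t ≤ s)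
    (htR : t ≤ R) :
    (∀ z ∈ Metric.closedBall x₀ t, ∃ ez : X ≃L[ℝ] Y, (ez : X →L[ℝ] Y) = f' z ∧
      ∀ r : X, ‖r‖ ≤ d → z - ez.symm (f z) + r ∈ Metric.closedBall x₀ t) ∧
    (∀ (x rs : ℕ → X), x 0 = x₀ → (∀ k, ‖rs k‖ ≤ d) →
      (∀ k, ∀ ek : X ≃L[ℝ] Y, (ek : X →L[ℝ] Y) = f' (x k) →
        x (k + 1) = x k - ek.symm (f (x k)) + rs k) →
      ∀ k, x k ∈ Metric.closedBall x₀ t ∧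
        ∃ ek : X ≃L[ℝ] Y, (ek : X →L[ℝ] Y) = f' (x k)) :=
  stmt_10_general U f f' hf x₀ R hball e₀ he₀ η K d hK hd hKd hη₀ hLip t hroot hsmallest htR
end

section
/- Under the hypotheses of the inexact Newton theorem (as above), letting x* be the unique zero of f in B̄(x₀, t*) and {x_k} the inexact Newton sequence x_{k+1} = x_k − Df(x_k)⁻¹f(x_k) + r_k with ‖r_k‖ ≤ d, one has for all k: ‖x* − x_{k+1}‖ ≤ (√3/2)·K·‖x* − x_k‖² + ‖r_k‖. -/
/-!
Newton's method is affine invariant, so after composing `f` with `e₀⁻¹` we may assume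
`f' x₀ = 1`. A `K`-Lipschitz derivative gives the Taylor bound
`‖f y - f x - f' x (y - x)‖ ≤ K/2 ‖y - x‖²`, and for `x ∈ B̄(x₀, t*)` we have
`‖1 - f' x‖ ≤ K t* < 1`, so `f' x` is invertible (Neumann series) and
`(1 - K t*) ‖z‖ ≤ ‖f' x z‖`. Applied to the error of an exact Newton step this yields
`(1 - K t*) (‖x* - x_{k+1}‖ - ‖r_k‖) ≤ K/2 ‖x* - x_k‖²`, and `g_d(t*) = 0` shows by induction
that the iterates never leave `B̄(x₀, t*)`. Finally `t*` lies below the midpoint of the two roots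
of `g_d`, whose discriminant is nonnegative; this forces `K d ≤ 2 - √3`, hence
`K t* ≤ 1 - 1/√3`, i.e. `1 / (1 - K t*) ≤ √3`.
-/

lemma Convex.norm_image_sub_sub_fderiv_le {E F : Type*} [NormedAddCommGroup E]
    [NormedSpace ℝ E] [NormedAddCommGroup F] [NormedSpace ℝ F] {s : Set E} (hs : Convex ℝ s)
    {g : E → F} {g' : E → E →L[ℝ] F} {K : ℝ} (hder : ∀ z ∈ s, HasFDerivAt g (g' z) z)
    {x y : E} (hx : x ∈ s) (hy : y ∈ s) (hlip : ∀ z ∈ s, ‖g' z - g' x‖ ≤ K * ‖z - x‖) :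
    ‖g y - g x - g' x (y - x)‖ ≤ K / 2 * ‖y - x‖ ^ 2 := by
  set v := y - x
  have hseg : ∀ θ ∈ Set.Icc (0 : ℝ) 1, x + θ • v ∈ s := fun θ hθ => hs.add_smul_sub_mem hx hy hθ
  -- Compare the growth of `φ` with that of `θ ↦ K ‖v‖² θ² / 2`.
  set φ : ℝ → F := fun θ => g (x + θ • v) - g x - θ • g' x v
  have hφ : ∀ θ ∈ Set.Icc (0 : ℝ) 1, HasDerivAt φ ((g' (x + θ • v) - g' x) v) θ := by
    intro θ hθ
    have hline : HasDerivAt (fun θ : ℝ => x + θ • v) v θ := by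
      simpa using ((hasDerivAt_id θ).smul_const v).const_add x
    have := (((hder _ (hseg θ hθ)).comp_hasDerivAt θ hline).sub_const (g x)).sub
      ((hasDerivAt_id θ).smul_const (g' x v))
    simpa [φ, Pi.sub_def] using this
  have hbound : ∀ θ ∈ Set.Ico (0 : ℝ) 1,
      ‖(g' (x + θ • v) - g' x) v‖ ≤ K * ‖v‖ ^ 2 * θ := fun θ hθ =>
    calc ‖(g' (x + θ • v) - g' x) v‖ ≤ ‖g' (x + θ • v) - g' x‖ * ‖v‖ :=
          ContinuousLinearMap.le_opNorm _ _
      _ ≤ K * ‖x + θ • v - x‖ * ‖v‖ := by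
          gcongr; exact hlip _ (hseg θ (Set.Ico_subset_Icc_self hθ))
      _ = K * ‖v‖ ^ 2 * θ := by
          rw [add_sub_cancel_left, norm_smul, Real.norm_of_nonneg hθ.1]; ring
  have hB : ∀ θ : ℝ, HasDerivAt (fun θ : ℝ => K / 2 * ‖v‖ ^ 2 * θ ^ 2) (K * ‖v‖ ^ 2 * θ) θ :=
    fun θ => ((hasDerivAt_pow 2 θ).const_mul (K / 2 * ‖v‖ ^ 2)).congr_deriv (by ring)
  have := image_norm_le_of_norm_deriv_right_le_deriv_boundary
    (fun θ hθ => (hφ θ hθ).continuousAt.continuousWithinAt)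
    (fun θ hθ => (hφ θ (Set.Ico_subset_Icc_self hθ)).hasDerivWithinAt)
    (by simp [φ]) hB hbound (Set.right_mem_Icc.2 zero_le_one)
  simpa [φ, v] using this

section NeumannSeries

variable {𝕜 E : Type*} [NontriviallyNormedField 𝕜] [NormedAddCommGroup E] [NormedSpace 𝕜 E]

theorem ContinuousLinearMap.exists_equiv_eq_of_norm_one_sub_lt_one [CompleteSpace E]
    {N : E →L[𝕜] E} (hN : ‖1 - N‖ < 1) : ∃ M : E ≃L[𝕜] E, (M : E →L[𝕜] E) = N := by
  obtain ⟨u, rfl⟩ : IsUnit N := sub_sub_self 1 N ▸ (Units.oneSub (1 - N) hN).isUnit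
  exact ⟨ContinuousLinearEquiv.unitsEquiv 𝕜 E u, by ext; rfl⟩

theorem ContinuousLinearMap.one_sub_mul_norm_le_norm_apply_s11 {N : E →L[𝕜] E} {c : ℝ}
    (hN : ‖1 - N‖ ≤ c) (z : E) : (1 - c) * ‖z‖ ≤ ‖N z‖ := by
  have : ‖z‖ ≤ c * ‖z‖ + ‖N z‖ :=
    calc ‖z‖ = ‖(1 - N) z + N z‖ := by simp
      _ ≤ ‖1 - N‖ * ‖z‖ + ‖N z‖ := norm_add_le_of_le ((1 - N).le_opNorm z) le_rfl
      _ ≤ c * ‖z‖ + ‖N z‖ := by gcongr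
  linarith

end NeumannSeries

theorem norm_sub_newtonStep_le {E : Type*} [NormedAddCommGroup E] [NormedSpace ℝ E]
    {s : Set E} (hs : Convex ℝ s) {g : E → E} {g' : E → E →L[ℝ] E} {K c : ℝ}
    (hder : ∀ z ∈ s, HasFDerivAt g (g' z) z) {x xs : E} (hx : x ∈ s) (hxs : xs ∈ s)
    (hlip : ∀ z ∈ s, ‖g' z - g' x‖ ≤ K * ‖z - x‖) (hgxs : g xs = 0)
    (hc : ‖1 - g' x‖ ≤ c) {M : E ≃L[ℝ] E} (hM : (M : E →L[ℝ] E) = g' x) :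
    (1 - c) * ‖xs - (x - M.symm (g x))‖ ≤ K / 2 * ‖xs - x‖ ^ 2 :=
  calc (1 - c) * ‖xs - (x - M.symm (g x))‖ ≤ ‖g' x (xs - (x - M.symm (g x)))‖ :=
        ContinuousLinearMap.one_sub_mul_norm_le_norm_apply_s11 hc _
    _ = ‖g xs - g x - g' x (xs - x)‖ := by
        rw [← hM, ← norm_neg]
        congr 1
        simp only [ContinuousLinearEquiv.coe_coe, map_sub, ContinuousLinearEquiv.apply_symm_apply,
          hgxs]
        abel
    _ ≤ K / 2 * ‖xs - x‖ ^ 2 := hs.norm_image_sub_sub_fderiv_le hder hx hxs hlip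

theorem norm_sub_mul_one_sub_le_of_apply_eq_zero {E : Type*} [NormedAddCommGroup E]
    [NormedSpace ℝ E] {s : Set E} (hs : Convex ℝ s) {g : E → E} {g' : E → E →L[ℝ] E} {K t : ℝ}
    (hder : ∀ z ∈ s, HasFDerivAt g (g' z) z) {x₀ xs : E} (hx₀ : x₀ ∈ s) (hxs : xs ∈ s)
    (hg'₀ : g' x₀ = 1) (hlip : ∀ z ∈ s, ‖g' z - g' x₀‖ ≤ K * ‖z - x₀‖) (hK : 0 ≤ K)
    (hgxs : g xs = 0) (ht : ‖xs - x₀‖ ≤ t) :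
    ‖xs - x₀‖ * (1 - K * t) ≤ ‖g x₀‖ := by
  have htaylor := hs.norm_image_sub_sub_fderiv_le hder hx₀ hxs hlip
  rw [hgxs, hg'₀, one_apply_eq_self, zero_sub, ← norm_neg, neg_sub, sub_neg_eq_add] at htaylor
  have := norm_sub_le (xs - x₀ + g x₀) (g x₀)
  rw [add_sub_cancel_right] at this
  have hhalf : 0 ≤ t - ‖xs - x₀‖ / 2 := by linarith [norm_nonneg (xs - x₀)]
  nlinarith [mul_nonneg (mul_nonneg hK (norm_nonneg (xs - x₀))) hhalf]

/-- The majorant `g_d` of the inexact Newton theorem. -/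
noncomputable def newtonMajorant (η K d s : ℝ) : ℝ :=
  (η + d) - (1 + K * d) * s + 3 * K / 2 * s ^ 2

theorem mul_le_of_isLeast_newtonMajorant_zero {η K d t : ℝ} (hη : 0 ≤ η) (hK : 0 < K)
    (hKd : K * d ≤ 1) (ht : IsLeast {s | newtonMajorant η K d s = 0} t) :
    K * t ≤ 1 - √3 / 3 := by
  have hroot : newtonMajorant η K d t = 0 := ht.1
  unfold newtonMajorant at hroot
  -- The roots of the majorant sum to `2 (1 + K d) / (3 K)`.
  have hvieta : 3 * K * t ≤ 1 + K * d := by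
    have hother : newtonMajorant η K d (2 * (1 + K * d) / (3 * K) - t) = 0 := by
      unfold newtonMajorant
      field_simp
      linear_combination 6 * K * hroot
    have := ht.2 hother
    rw [le_sub_iff_add_le, le_div_iff₀ (by positivity)] at this
    linarith
  have hdisc : (1 + K * d) ^ 2 - 6 * K * (η + d) = (3 * K * t - (1 + K * d)) ^ 2 := by
    linear_combination (-6 * K) * hroot
  have hsqrt : √3 ≤ 2 - K * d :=
    Real.sqrt_le_iff.2 ⟨by linarith, by nlinarith [sq_nonneg (3 * K * t - (1 + K * d))]⟩
  linarith

theorem one_le_sqrt_three_mul_one_sub {u : ℝ} (hu : u ≤ 1 - √3 / 3) : 1 ≤ √3 * (1 - u) := by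
  have h3 : √3 * √3 = 3 := Real.mul_self_sqrt (by norm_num)
  nlinarith [Real.sqrt_nonneg 3]

section InexactNewton

open Metric

variable {E : Type*} [NormedAddCommGroup E] [NormedSpace ℝ E] {g : E → E}
  {g' : E → E →L[ℝ] E} {x₀ : E} {R K t : ℝ}

theorem inexactNewton_step_error_le [CompleteSpace E]
    (hder : ∀ z ∈ closedBall x₀ R, HasFDerivAt g (g' z) z) (hg'₀ : g' x₀ = 1)
    (hlip : ∀ z ∈ closedBall x₀ R, ∀ w ∈ closedBall x₀ R, ‖g' z - g' w‖ ≤ K * ‖z - w‖)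
    (hK : 0 ≤ K) (htR : t ≤ R) (hKt : K * t < 1) {xs : E} (hxs : xs ∈ closedBall x₀ R)
    (hgxs : g xs = 0) {x x' ρ : E} (hx : x ∈ closedBall x₀ t)
    (hx' : ∀ M : E ≃L[ℝ] E, (M : E →L[ℝ] E) = g' x → x' = x - M.symm (g x) + ρ) :
    (1 - K * t) * (‖xs - x'‖ - ‖ρ‖) ≤ K / 2 * ‖xs - x‖ ^ 2 := by
  have ht : 0 ≤ t := dist_nonneg.trans hx
  have hxR : x ∈ closedBall x₀ R := closedBall_subset_closedBall htR hx
  have hc : ‖1 - g' x‖ ≤ K * t := by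
    rw [← hg'₀, ← dist_eq_norm]
    calc dist (g' x₀) (g' x) ≤ K * dist x₀ x := by
          simpa only [dist_eq_norm] using
            hlip x₀ (closedBall_subset_closedBall htR (mem_closedBall_self ht)) x hxR
      _ ≤ K * t := by rw [dist_comm]; exact mul_le_mul_of_nonneg_left hx hK
  obtain ⟨M, hM⟩ :=
    ContinuousLinearMap.exists_equiv_eq_of_norm_one_sub_lt_one (hc.trans_lt hKt)
  have hstep := norm_sub_newtonStep_le (convex_closedBall x₀ R) hder hxR hxs
    (fun z hz => hlip z hz x hxR) hgxs hc hM
  have hinexact : ‖xs - x'‖ - ‖ρ‖ ≤ ‖xs - (x - M.symm (g x))‖ := by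
    rw [hx' M hM, sub_le_iff_le_add, ← sub_sub]
    exact norm_sub_le _ _
  calc (1 - K * t) * (‖xs - x'‖ - ‖ρ‖) ≤ (1 - K * t) * ‖xs - (x - M.symm (g x))‖ := by
        gcongr
    _ ≤ K / 2 * ‖xs - x‖ ^ 2 := hstep

theorem inexactNewton_error_le [CompleteSpace E]
    (hder : ∀ z ∈ closedBall x₀ R, HasFDerivAt g (g' z) z) (hg'₀ : g' x₀ = 1)
    (hlip : ∀ z ∈ closedBall x₀ R, ∀ w ∈ closedBall x₀ R, ‖g' z - g' w‖ ≤ K * ‖z - w‖)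
    {η d : ℝ} (hη : 0 ≤ η) (hK : 0 < K) (hKd : K * d ≤ 1) (hgx₀ : ‖g x₀‖ ≤ η)
    (ht : IsLeast {s | newtonMajorant η K d s = 0} t) (htR : t ≤ R)
    {xs : E} (hxs : xs ∈ closedBall x₀ t) (hgxs : g xs = 0)
    {x rs : ℕ → E} (hx0 : x 0 = x₀) (hrs : ∀ k, ‖rs k‖ ≤ d)
    (hrec : ∀ k, ∀ M : E ≃L[ℝ] E, (M : E →L[ℝ] E) = g' (x k) →
      x (k + 1) = x k - M.symm (g (x k)) + rs k) (k : ℕ) :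
    ‖xs - x (k + 1)‖ ≤ √3 / 2 * K * ‖xs - x k‖ ^ 2 + ‖rs k‖ := by
  have hKt := mul_le_of_isLeast_newtonMajorant_zero hη hK hKd ht
  have hKt1 : K * t < 1 := by linarith [Real.sqrt_pos.2 (by norm_num : (0 : ℝ) < 3)]
  have ht0 : 0 ≤ t := dist_nonneg.trans hxs
  have hx₀R : x₀ ∈ closedBall x₀ R := mem_closedBall_self (ht0.trans htR)
  have hxsR : xs ∈ closedBall x₀ R := closedBall_subset_closedBall htR hxs
  have step k (hk : x k ∈ closedBall x₀ t) := inexactNewton_step_error_le hder hg'₀ hlip hK.le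
    htR hKt1 hxsR hgxs hk (hrec k)
  have hs₀t : ‖xs - x₀‖ ≤ t := mem_closedBall_iff_norm.1 hxs
  have hs₀ : ‖xs - x₀‖ * (1 - K * t) ≤ η :=
    (norm_sub_mul_one_sub_le_of_apply_eq_zero (convex_closedBall x₀ R) hder hx₀R hxsR hg'₀
      (fun z hz => hlip z hz x₀ hx₀R) hK.le hgxs hs₀t).trans hgx₀
  have hinv : ∀ k, x k ∈ closedBall x₀ t ∧ ‖xs - x k‖ ≤ t := by
    intro k
    induction k with
    | zero => rw [hx0]; exact ⟨mem_closedBall_self ht0, hs₀t⟩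
    | succ n ih =>
      have hroot : newtonMajorant η K d t = 0 := ht.1
      unfold newtonMajorant at hroot
      have hsq : ‖xs - x n‖ ^ 2 ≤ t ^ 2 := pow_le_pow_left₀ (norm_nonneg _) ih.2 2
      have hclose : ‖xs - x (n + 1)‖ ≤ t - ‖xs - x₀‖ := by
        refine le_of_mul_le_mul_left ?_ (sub_pos.2 hKt1)
        nlinarith [step n ih.1, mul_le_mul_of_nonneg_left (hrs n) (sub_pos.2 hKt1).le,
          mul_le_mul_of_nonneg_left hsq hK.le]
      refine ⟨mem_closedBall.2 ((dist_triangle_left _ _ xs).trans ?_), ?_⟩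
      · rw [dist_eq_norm, dist_eq_norm]; linarith
      · linarith [norm_nonneg (xs - x₀)]
  have hstep := step k (hinv k).1
  have hsqrt := one_le_sqrt_three_mul_one_sub hKt
  rcases le_total ‖xs - x (k + 1)‖ ‖rs k‖ with h | h
  · have : 0 ≤ √3 / 2 * K * ‖xs - x k‖ ^ 2 := by positivity
    linarith
  · nlinarith [mul_le_mul_of_nonneg_left hstep (Real.sqrt_nonneg 3),
      mul_le_mul_of_nonneg_right hsqrt (sub_nonneg.2 h)]

end InexactNewton

theorem stmt_11_general
    {X Y : Type*} [NormedAddCommGroup X] [NormedSpace ℝ X] [CompleteSpace X]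
    [NormedAddCommGroup Y] [NormedSpace ℝ Y]
    (U : Set X) (f : X → Y) (f' : X → (X →L[ℝ] Y))
    (hf : ∀ x ∈ U, HasFDerivAt f (f' x) x)
    (x₀ : X) (R : ℝ)
    (hball : Metric.closedBall x₀ R ⊆ U)
    (e₀ : X ≃L[ℝ] Y) (he₀ : (e₀ : X →L[ℝ] Y) = f' x₀)
    (η K d : ℝ) (hη : 0 ≤ η) (hK : 0 < K) (hKd : K * d ≤ 1)
    (hη₀ : ‖e₀.symm (f x₀)‖ ≤ η)
    (hLip : ∀ x ∈ Metric.closedBall x₀ R, ∀ y ∈ Metric.closedBall x₀ R,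
      ‖(e₀.symm : Y →L[ℝ] X).comp (f' x - f' y)‖ ≤ K * ‖x - y‖)
    (t : ℝ)
    (hroot : (η + d) - (1 + K * d) * t + 3 * K / 2 * t ^ 2 = 0)
    (hsmallest : ∀ s : ℝ, (η + d) - (1 + K * d) * s + 3 * K / 2 * s ^ 2 = 0 → t ≤ s)
    (htR : t ≤ R)
    (xstar : X) (hxstar : xstar ∈ Metric.closedBall x₀ t ∧ f xstar = 0)
    (x rs : ℕ → X) (hx0 : x 0 = x₀) (hrs : ∀ k, ‖rs k‖ ≤ d)
    (hrec : ∀ k, ∀ ek : X ≃L[ℝ] Y, (ek : X →L[ℝ] Y) = f' (x k) →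
      x (k + 1) = x k - ek.symm (f (x k)) + rs k) :
    ∀ k, ‖xstar - x (k + 1)‖ ≤
      Real.sqrt 3 / 2 * K * ‖xstar - x k‖ ^ 2 + ‖rs k‖ := by
  set A : Y →L[ℝ] X := (e₀.symm : Y →L[ℝ] X)
  refine inexactNewton_error_le (g := A ∘ f) (g' := fun z => A.comp (f' z))
    (fun z hz => A.hasFDerivAt.comp z (hf z (hball hz))) ?_ ?_ hη hK hKd hη₀
    ⟨hroot, hsmallest⟩ htR hxstar.1 (by simp [hxstar.2]) hx0 hrs ?_
  · ext z
    simp [A, ← he₀]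
  · intro z hz w hw
    rw [← ContinuousLinearMap.comp_sub]
    exact hLip z hz w hw
  · intro k M hM
    refine hrec k (M.trans e₀) ?_
    ext z
    have hMz : M z = A (f' (x k) z) := by rw [← ContinuousLinearEquiv.coe_coe M, hM]; rfl
    simp [hMz, A]

theorem stmt_11
    {X Y : Type*} [NormedAddCommGroup X] [NormedSpace ℝ X] [CompleteSpace X]
    [NormedAddCommGroup Y] [NormedSpace ℝ Y] [CompleteSpace Y]
    (U : Set X) (hU : IsOpen U) (f : X → Y) (f' : X → (X →L[ℝ] Y))
    (hf : ∀ x ∈ U, HasFDerivAt f (f' x) x)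
    (x₀ : X) (hx₀ : x₀ ∈ U) (R : ℝ) (hR : 0 < R)
    (hball : Metric.closedBall x₀ R ⊆ U)
    (e₀ : X ≃L[ℝ] Y) (he₀ : (e₀ : X →L[ℝ] Y) = f' x₀)
    (η K d : ℝ) (hη : 0 ≤ η) (hK : 0 < K) (hd : 0 < d) (hKd : K * d ≤ 1)
    (hη₀ : ‖e₀.symm (f x₀)‖ ≤ η)
    (hLip : ∀ x ∈ Metric.closedBall x₀ R, ∀ y ∈ Metric.closedBall x₀ R,
      ‖(e₀.symm : Y →L[ℝ] X).comp (f' x - f' y)‖ ≤ K * ‖x - y‖)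
    (t : ℝ)
    (hroot : (η + d) - (1 + K * d) * t + 3 * K / 2 * t ^ 2 = 0)
    (hsmallest : ∀ s : ℝ, (η + d) - (1 + K * d) * s + 3 * K / 2 * s ^ 2 = 0 → t ≤ s)
    (htR : t ≤ R)
    (xstar : X) (hxstar : xstar ∈ Metric.closedBall x₀ t ∧ f xstar = 0)
    (x rs : ℕ → X) (hx0 : x 0 = x₀) (hrs : ∀ k, ‖rs k‖ ≤ d)
    (hrec : ∀ k, ∀ ek : X ≃L[ℝ] Y, (ek : X →L[ℝ] Y) = f' (x k) →
      x (k + 1) = x k - ek.symm (f (x k)) + rs k) :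
    ∀ k, ‖xstar - x (k + 1)‖ ≤
      Real.sqrt 3 / 2 * K * ‖xstar - x k‖ ^ 2 + ‖rs k‖ :=
  stmt_11_general U f f' hf x₀ R hball e₀ he₀ η K d hη hK hKd hη₀ hLip t hroot hsmallest htR xstar
    hxstar x rs hx0 hrs hrec
end

section
/- Under the hypotheses of the inexact Newton theorem (as above), if additionally ‖r_k‖ → 0 as k → ∞, then the inexact Newton sequence x_k converges to the unique zero x* of f in B̄(x₀, t*). -/
/-!
Normalising by `e₀`, the map `F = e₀⁻¹ ∘ f` has a `K`-Lipschitz derivative `A` with `A x₀ = 1`.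
Hence on `B̄(x₀, t)` every `A z` is invertible with `‖(A z)⁻¹‖ ≤ (1 - K t)⁻¹` (Neumann series),
and the Taylor remainder of `F` is at most `K/2 ‖·‖²`. Comparing an inexact Newton step with `x₀`
keeps the iterates in `B̄(x₀, t)`, precisely because `t` is a root of the quadratic; comparing it
with `x*` gives `‖x_{k+1} - x*‖ ≤ q ‖x_k - x*‖ + ‖r_k‖` with `q = K t / (1 - K t)`, and `q < 1`
because minimality of `t` forces `2 K t < 1`. A contraction perturbed by a null sequence tends
to zero.
-/

open Set Filter Topology Metric

theorem Convex.norm_image_sub_sub_apply_le_of_lipschitz {E G : Type*} [NormedAddCommGroup E]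
    [NormedSpace ℝ E] [NormedAddCommGroup G] [NormedSpace ℝ G] {s : Set E} (hs : Convex ℝ s)
    {F : E → G} {A : E → E →L[ℝ] G} (hF : ∀ z ∈ s, HasFDerivAt F (A z) z) {K : ℝ}
    (hA : ∀ p ∈ s, ∀ q ∈ s, ‖A p - A q‖ ≤ K * ‖p - q‖) {u v : E} (hu : u ∈ s) (hv : v ∈ s) :
    ‖F v - F u - A u (v - u)‖ ≤ K / 2 * ‖v - u‖ ^ 2 := by
  set γ : ℝ → E := fun τ => u + τ • (v - u)
  have hγs : ∀ τ ∈ Icc (0 : ℝ) 1, γ τ ∈ s := fun τ hτ => hs.add_smul_sub_mem hu hv hτ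
  have hderiv : ∀ τ ∈ Icc (0 : ℝ) 1, HasDerivAt (fun σ => F (γ σ) - F u - σ • A u (v - u))
      ((A (γ τ) - A u) (v - u)) τ := by
    intro τ hτ
    have hγ : HasDerivAt γ (v - u) τ := by
      have := ((hasDerivAt_id τ).smul_const (v - u)).const_add u
      rwa [one_smul] at this
    have := (((hF _ (hγs τ hτ)).comp_hasDerivAt τ hγ).sub_const (F u)).sub
      ((hasDerivAt_id τ).smul_const (A u (v - u)))
    rwa [one_smul, ← sub_apply] at this
  have hbound : ∀ τ ∈ Ico (0 : ℝ) 1, ‖(A (γ τ) - A u) (v - u)‖ ≤ K * ‖v - u‖ ^ 2 * τ := by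
    intro τ hτ
    calc ‖(A (γ τ) - A u) (v - u)‖ ≤ K * ‖γ τ - u‖ * ‖v - u‖ :=
          (ContinuousLinearMap.le_opNorm _ _).trans <| by
            gcongr; exact hA _ (hγs τ (Ico_subset_Icc_self hτ)) u hu
      _ = K * ‖v - u‖ ^ 2 * τ := by
          simp only [γ, add_sub_cancel_left, norm_smul, Real.norm_of_nonneg hτ.1]; ring
  have hB : ∀ τ, HasDerivAt (fun τ => K / 2 * ‖v - u‖ ^ 2 * τ ^ 2) (K * ‖v - u‖ ^ 2 * τ) τ := by
    intro τ
    exact ((hasDerivAt_pow 2 τ).const_mul _).congr_deriv (by norm_num; ring)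
  simpa [γ] using image_norm_le_of_norm_deriv_right_le_deriv_boundary
    (fun τ hτ => (hderiv τ hτ).continuousAt.continuousWithinAt)
    (fun τ hτ => (hderiv τ (Ico_subset_Icc_self hτ)).hasDerivWithinAt)
    (by simp [γ]) hB hbound (right_mem_Icc.2 zero_le_one)

theorem ContinuousLinearEquiv.exists_eq_and_norm_symm_le {𝕜 X Y : Type*}
    [NontriviallyNormedField 𝕜] [NormedAddCommGroup X] [NormedSpace 𝕜 X] [CompleteSpace X]
    [NormedAddCommGroup Y] [NormedSpace 𝕜 Y] (e₀ : X ≃L[𝕜] Y) {L : X →L[𝕜] Y} {c : ℝ}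
    (hc : c < 1) (hL : ‖(e₀.symm : Y →L[𝕜] X).comp ((e₀ : X →L[𝕜] Y) - L)‖ ≤ c) :
    ∃ e : X ≃L[𝕜] Y, (e : X →L[𝕜] Y) = L ∧ ∀ y, ‖e.symm y‖ ≤ (1 - c)⁻¹ * ‖e₀.symm y‖ := by
  set T := (e₀.symm : Y →L[𝕜] X).comp ((e₀ : X →L[𝕜] Y) - L)
  set u := Units.oneSub T (hL.trans_lt hc)
  have hu : ∀ v, (u : X →L[𝕜] X) v = e₀.symm (L v) := fun v => by simp [u, T]
  set e := (ContinuousLinearEquiv.unitsEquiv 𝕜 X u).trans e₀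
  refine ⟨e, ContinuousLinearMap.ext fun v => by simp [e, hu], fun y => ?_⟩
  have hy : e₀.symm y = e.symm y - T (e.symm y) := by
    obtain ⟨w, rfl⟩ := e.surjective y
    rw [e.symm_apply_apply]
    simp only [e, trans_apply, symm_apply_apply, unitsEquiv_apply, u, Units.val_oneSub,
      sub_apply, one_apply_eq_self]
  have : ‖e.symm y‖ ≤ ‖e₀.symm y‖ + c * ‖e.symm y‖ := by
    calc ‖e.symm y‖ = ‖e₀.symm y + T (e.symm y)‖ := by rw [hy, sub_add_cancel]
      _ ≤ ‖e₀.symm y‖ + ‖T‖ * ‖e.symm y‖ :=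
        (norm_add_le _ _).trans (by gcongr; exact T.le_opNorm _)
      _ ≤ ‖e₀.symm y‖ + c * ‖e.symm y‖ := by gcongr
  rw [inv_mul_eq_div, le_div_iff₀ (sub_pos.2 hc)]
  linarith

theorem tendsto_zero_of_le_mul_add {e r : ℕ → ℝ} {q : ℝ} (hq0 : 0 ≤ q) (hq1 : q < 1)
    (he : ∀ k, 0 ≤ e k) (hrec : ∀ k, e (k + 1) ≤ q * e k + r k)
    (hr : Tendsto r atTop (𝓝 0)) : Tendsto e atTop (𝓝 0) := by
  refine tendsto_order.2 ⟨fun a ha => .of_forall fun k => ha.trans_le (he k), fun ε hε => ?_⟩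
  obtain ⟨N, hN⟩ := eventually_atTop.1 <|
    hr.eventually (eventually_le_nhds (by positivity : 0 < (1 - q) * (ε / 2)))
  have hle : ∀ m, e (N + m) ≤ q ^ m * e N + ε / 2 := by
    intro m
    induction m with
    | zero => simpa using (half_pos hε).le
    | succ m ih =>
      calc e (N + m + 1) ≤ q * (q ^ m * e N + ε / 2) + (1 - q) * (ε / 2) :=
            (hrec _).trans (add_le_add (by gcongr) (hN _ (N.le_add_right m)))
        _ = q ^ (m + 1) * e N + ε / 2 := by ring
  have hlim : Tendsto (fun m => q ^ m * e N + ε / 2) atTop (𝓝 (ε / 2)) := by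
    simpa using
      ((tendsto_pow_atTop_nhds_zero_of_lt_one hq0 hq1).mul_const (e N)).add_const (ε / 2)
  obtain ⟨M, hM⟩ := eventually_atTop.1 (hlim.eventually (gt_mem_nhds (half_lt_self hε)))
  refine eventually_atTop.2 ⟨N + M, fun k hk => ?_⟩
  obtain ⟨m, rfl⟩ := Nat.exists_eq_add_of_le (le_of_add_le_left hk)
  exact (hle m).trans_lt (hM m (by omega))

theorem two_mul_mul_lt_one_of_smallest_root {η K d t : ℝ} (hη : 0 ≤ η) (hK : 0 < K)
    (hKd : K * d ≤ 1) (hroot : (η + d) - (1 + K * d) * t + 3 * K / 2 * t ^ 2 = 0)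
    (hsmallest : ∀ s : ℝ, (η + d) - (1 + K * d) * s + 3 * K / 2 * s ^ 2 = 0 → t ≤ s) :
    2 * (K * t) < 1 := by
  have hle_other : t ≤ 2 * (1 + K * d) / (3 * K) - t := by
    refine hsmallest _ ?_
    rw [← hroot]
    field_simp
    ring
  have hsum : 3 * (K * t) ≤ 1 + K * d := by
    rw [le_sub_iff_add_le, ← two_mul, le_div_iff₀ (by positivity)] at hle_other
    linarith
  have hdisc : 6 * (K * d) ≤ (1 + K * d) ^ 2 := by
    nlinarith [sq_nonneg (1 + K * d - 3 * K * t), mul_nonneg hK.le hη]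
  -- `6 s ≤ (1 + s) ^ 2` and `s ≤ 1` force `s ≤ 2 - √3` for `s = K d`
  have hKd_half : 2 * (K * d) < 1 := by nlinarith
  linarith

theorem norm_newtonStep_sub_le {X Y : Type*} [NormedAddCommGroup X] [NormedSpace ℝ X]
    [NormedAddCommGroup Y] [NormedSpace ℝ Y] {s : Set X} (hs : Convex ℝ s) {f : X → Y}
    {f' : X → X →L[ℝ] Y} (hf : ∀ x ∈ s, HasFDerivAt f (f' x) x) {e₀ : X ≃L[ℝ] Y} {K : ℝ}
    (hLip : ∀ x ∈ s, ∀ y ∈ s, ‖(e₀.symm : Y →L[ℝ] X).comp (f' x - f' y)‖ ≤ K * ‖x - y‖)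
    {z p : X} (hz : z ∈ s) (hp : p ∈ s) {e : X ≃L[ℝ] Y} (he : (e : X →L[ℝ] Y) = f' z)
    {M : ℝ} (hM0 : 0 ≤ M) (hM : ∀ y, ‖e.symm y‖ ≤ M * ‖e₀.symm y‖) (r : X) :
    ‖z - e.symm (f z) + r - p‖ ≤ M * (K / 2 * ‖p - z‖ ^ 2 + ‖e₀.symm (f p)‖) + ‖r‖ := by
  set w := f p - f z - f' z (p - z)
  have htaylor : ‖e₀.symm w‖ ≤ K / 2 * ‖p - z‖ ^ 2 := by
    simpa [w] using hs.norm_image_sub_sub_apply_le_of_lipschitz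
      (F := fun x => e₀.symm (f x)) (A := fun x => (e₀.symm : Y →L[ℝ] X).comp (f' x))
      (fun x hx => (e₀.symm : Y →L[ℝ] X).hasFDerivAt.comp x (hf x hx))
      (fun a ha b hb => by rw [← ContinuousLinearMap.comp_sub]; exact hLip a ha b hb) hz hp
  have hstep : z - e.symm (f z) + r - p = e.symm (w - f p) + r := by
    have : e.symm (f' z (p - z)) = p - z := by rw [← he]; exact e.symm_apply_apply _
    rw [map_sub, map_sub, this, map_sub]
    abel
  calc ‖z - e.symm (f z) + r - p‖ ≤ ‖e.symm (w - f p)‖ + ‖r‖ := hstep ▸ norm_add_le _ _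
    _ ≤ M * (‖e₀.symm w‖ + ‖e₀.symm (f p)‖) + ‖r‖ := by
      gcongr
      exact (hM _).trans (by rw [map_sub]; gcongr; exact norm_sub_le _ _)
    _ ≤ M * (K / 2 * ‖p - z‖ ^ 2 + ‖e₀.symm (f p)‖) + ‖r‖ := by gcongr

section InexactNewton

variable {X Y : Type*} [NormedAddCommGroup X] [NormedSpace ℝ X] [NormedAddCommGroup Y]
  [NormedSpace ℝ Y] {f : X → Y} {f' : X → X →L[ℝ] Y} {e₀ : X ≃L[ℝ] Y} {x₀ z : X} {R K t : ℝ}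

theorem exists_continuousLinearEquiv_eq_of_mem_closedBall [CompleteSpace X]
    (he₀ : (e₀ : X →L[ℝ] Y) = f' x₀)
    (hLip : ∀ x ∈ closedBall x₀ R, ∀ y ∈ closedBall x₀ R,
      ‖(e₀.symm : Y →L[ℝ] X).comp (f' x - f' y)‖ ≤ K * ‖x - y‖)
    (hK : 0 ≤ K) (hKt : K * t < 1) (htR : t ≤ R) (hz : z ∈ closedBall x₀ t) :
    ∃ e : X ≃L[ℝ] Y, (e : X →L[ℝ] Y) = f' z ∧ ∀ y, ‖e.symm y‖ ≤ (1 - K * t)⁻¹ * ‖e₀.symm y‖ := by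
  have hzR : z ∈ closedBall x₀ R := closedBall_subset_closedBall htR hz
  refine e₀.exists_eq_and_norm_symm_le hKt ?_
  rw [he₀]
  refine (hLip _ (mem_closedBall_self (nonempty_closedBall.1 ⟨z, hzR⟩)) _ hzR).trans ?_
  rw [norm_sub_rev]
  exact mul_le_mul_of_nonneg_left (mem_closedBall_iff_norm.1 hz) hK

theorem inexactNewtonStep_mem_closedBall {e : X ≃L[ℝ] Y} {η d : ℝ} {r : X}
    (hf : ∀ x ∈ closedBall x₀ R, HasFDerivAt f (f' x) x)
    (hLip : ∀ x ∈ closedBall x₀ R, ∀ y ∈ closedBall x₀ R,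
      ‖(e₀.symm : Y →L[ℝ] X).comp (f' x - f' y)‖ ≤ K * ‖x - y‖)
    (hη₀ : ‖e₀.symm (f x₀)‖ ≤ η)
    (hroot : (η + d) - (1 + K * d) * t + 3 * K / 2 * t ^ 2 = 0) (hK : 0 ≤ K) (hKt : K * t < 1)
    (htR : t ≤ R) (hz : z ∈ closedBall x₀ t) (he : (e : X →L[ℝ] Y) = f' z)
    (hM : ∀ y, ‖e.symm y‖ ≤ (1 - K * t)⁻¹ * ‖e₀.symm y‖) (hr : ‖r‖ ≤ d) :
    z - e.symm (f z) + r ∈ closedBall x₀ t := by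
  have hzR : z ∈ closedBall x₀ R := closedBall_subset_closedBall htR hz
  have hx₀R : x₀ ∈ closedBall x₀ R := mem_closedBall_self (nonempty_closedBall.1 ⟨z, hzR⟩)
  have hne : 1 - K * t ≠ 0 := by linarith
  have hfixed : (1 - K * t)⁻¹ * (K / 2 * t ^ 2 + η) + d = t := by
    rw [inv_mul_eq_div, div_add' _ _ _ hne, div_eq_iff hne]
    linear_combination hroot
  rw [mem_closedBall_iff_norm]
  calc ‖z - e.symm (f z) + r - x₀‖
      ≤ (1 - K * t)⁻¹ * (K / 2 * ‖x₀ - z‖ ^ 2 + ‖e₀.symm (f x₀)‖) + ‖r‖ :=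
        norm_newtonStep_sub_le (convex_closedBall x₀ R) hf hLip hzR hx₀R he
          (inv_nonneg.2 (by linarith)) hM r
    _ ≤ (1 - K * t)⁻¹ * (K / 2 * t ^ 2 + η) + d := by
        have : ‖x₀ - z‖ ≤ t := by rw [norm_sub_rev]; exact mem_closedBall_iff_norm.1 hz
        have : 0 ≤ (1 - K * t)⁻¹ := inv_nonneg.2 (by linarith)
        gcongr
    _ = t := hfixed

theorem norm_inexactNewtonStep_sub_le {e : X ≃L[ℝ] Y} {xstar r : X}
    (hf : ∀ x ∈ closedBall x₀ R, HasFDerivAt f (f' x) x)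
    (hLip : ∀ x ∈ closedBall x₀ R, ∀ y ∈ closedBall x₀ R,
      ‖(e₀.symm : Y →L[ℝ] X).comp (f' x - f' y)‖ ≤ K * ‖x - y‖)
    (hK : 0 ≤ K) (hKt : K * t < 1) (htR : t ≤ R) (hxstar : xstar ∈ closedBall x₀ t)
    (hfxstar : f xstar = 0) (hz : z ∈ closedBall x₀ t) (he : (e : X →L[ℝ] Y) = f' z)
    (hM : ∀ y, ‖e.symm y‖ ≤ (1 - K * t)⁻¹ * ‖e₀.symm y‖) :
    ‖z - e.symm (f z) + r - xstar‖ ≤ K * t * (1 - K * t)⁻¹ * ‖z - xstar‖ + ‖r‖ := by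
  have hM0 : 0 ≤ (1 - K * t)⁻¹ := inv_nonneg.2 (by linarith)
  have h2t : ‖z - xstar‖ ≤ 2 * t := by
    have := mem_closedBall_iff_norm.1 hxstar
    rw [norm_sub_rev] at this
    linarith [norm_sub_le_norm_sub_add_norm_sub z x₀ xstar, mem_closedBall_iff_norm.1 hz]
  have hquad : K / 2 * ‖z - xstar‖ ^ 2 ≤ K * t * ‖z - xstar‖ := by
    nlinarith [mul_nonneg (mul_nonneg hK (norm_nonneg (z - xstar))) (sub_nonneg.2 h2t)]
  have hsub := closedBall_subset_closedBall (x := x₀) htR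
  calc ‖z - e.symm (f z) + r - xstar‖
      ≤ (1 - K * t)⁻¹ * (K / 2 * ‖xstar - z‖ ^ 2 + ‖e₀.symm (f xstar)‖) + ‖r‖ :=
        norm_newtonStep_sub_le (convex_closedBall x₀ R) hf hLip (hsub hz) (hsub hxstar) he
          hM0 hM r
    _ ≤ K * t * (1 - K * t)⁻¹ * ‖z - xstar‖ + ‖r‖ := by
        rw [hfxstar, map_zero, norm_zero, add_zero, norm_sub_rev]
        linarith [mul_le_mul_of_nonneg_left hquad hM0]

end InexactNewton

theorem stmt_12_general
    {X Y : Type*} [NormedAddCommGroup X] [NormedSpace ℝ X] [CompleteSpace X]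
    [NormedAddCommGroup Y] [NormedSpace ℝ Y]
    (U : Set X) (f : X → Y) (f' : X → (X →L[ℝ] Y))
    (hf : ∀ x ∈ U, HasFDerivAt f (f' x) x)
    (x₀ : X) (R : ℝ)
    (hball : Metric.closedBall x₀ R ⊆ U)
    (e₀ : X ≃L[ℝ] Y) (he₀ : (e₀ : X →L[ℝ] Y) = f' x₀)
    (η K d : ℝ) (hη : 0 ≤ η) (hK : 0 < K) (hKd : K * d ≤ 1)
    (hη₀ : ‖e₀.symm (f x₀)‖ ≤ η)
    (hLip : ∀ x ∈ Metric.closedBall x₀ R, ∀ y ∈ Metric.closedBall x₀ R,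
      ‖(e₀.symm : Y →L[ℝ] X).comp (f' x - f' y)‖ ≤ K * ‖x - y‖)
    (t : ℝ)
    (hroot : (η + d) - (1 + K * d) * t + 3 * K / 2 * t ^ 2 = 0)
    (hsmallest : ∀ s : ℝ, (η + d) - (1 + K * d) * s + 3 * K / 2 * s ^ 2 = 0 → t ≤ s)
    (htR : t ≤ R)
    (xstar : X) (hxstar : xstar ∈ Metric.closedBall x₀ t ∧ f xstar = 0)
    (x rs : ℕ → X) (hx0 : x 0 = x₀) (hrs : ∀ k, ‖rs k‖ ≤ d)
    (hrec : ∀ k, ∀ ek : X ≃L[ℝ] Y, (ek : X →L[ℝ] Y) = f' (x k) →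
      x (k + 1) = x k - ek.symm (f (x k)) + rs k)
    (hr0 : Filter.Tendsto (fun k => ‖rs k‖) Filter.atTop (nhds 0)) :
    Filter.Tendsto x Filter.atTop (nhds xstar) := by
  obtain ⟨hxstar_t, hfxstar⟩ := hxstar
  have hfR : ∀ z ∈ closedBall x₀ R, HasFDerivAt f (f' z) z := fun z hz => hf z (hball hz)
  have hKt := two_mul_mul_lt_one_of_smallest_root hη hK hKd hroot hsmallest
  have step : ∀ k, x k ∈ closedBall x₀ t → x (k + 1) ∈ closedBall x₀ t ∧
      ‖x (k + 1) - xstar‖ ≤ K * t * (1 - K * t)⁻¹ * ‖x k - xstar‖ + ‖rs k‖ := by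
    intro k hk
    obtain ⟨ek, hek, hM⟩ :=
      exists_continuousLinearEquiv_eq_of_mem_closedBall he₀ hLip hK.le (by linarith) htR hk
    rw [hrec k ek hek]
    exact ⟨inexactNewtonStep_mem_closedBall hfR hLip hη₀ hroot hK.le (by linarith) htR hk hek hM
        (hrs k),
      norm_inexactNewtonStep_sub_le hfR hLip hK.le (by linarith) htR hxstar_t hfxstar hk hek hM⟩
  have ht0 : 0 ≤ t := nonempty_closedBall.1 ⟨xstar, hxstar_t⟩
  have hmem : ∀ k, x k ∈ closedBall x₀ t := by
    intro k
    induction k with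
    | zero => exact hx0 ▸ mem_closedBall_self ht0
    | succ k ih => exact (step k ih).1
  have hq0 : 0 ≤ K * t * (1 - K * t)⁻¹ :=
    mul_nonneg (mul_nonneg hK.le ht0) (inv_nonneg.2 (by linarith))
  have hq1 : K * t * (1 - K * t)⁻¹ < 1 := by
    rw [← div_eq_mul_inv, div_lt_one (by linarith)]; linarith
  exact tendsto_iff_norm_sub_tendsto_zero.2 <|
    tendsto_zero_of_le_mul_add hq0 hq1 (fun _ => norm_nonneg _) (fun k => (step k (hmem k)).2) hr0

theorem stmt_12
    {X Y : Type*} [NormedAddCommGroup X] [NormedSpace ℝ X] [CompleteSpace X]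
    [NormedAddCommGroup Y] [NormedSpace ℝ Y] [CompleteSpace Y]
    (U : Set X) (hU : IsOpen U) (f : X → Y) (f' : X → (X →L[ℝ] Y))
    (hf : ∀ x ∈ U, HasFDerivAt f (f' x) x)
    (x₀ : X) (hx₀ : x₀ ∈ U) (R : ℝ) (hR : 0 < R)
    (hball : Metric.closedBall x₀ R ⊆ U)
    (e₀ : X ≃L[ℝ] Y) (he₀ : (e₀ : X →L[ℝ] Y) = f' x₀)
    (η K d : ℝ) (hη : 0 ≤ η) (hK : 0 < K) (hd : 0 < d) (hKd : K * d ≤ 1)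
    (hη₀ : ‖e₀.symm (f x₀)‖ ≤ η)
    (hLip : ∀ x ∈ Metric.closedBall x₀ R, ∀ y ∈ Metric.closedBall x₀ R,
      ‖(e₀.symm : Y →L[ℝ] X).comp (f' x - f' y)‖ ≤ K * ‖x - y‖)
    (t : ℝ)
    (hroot : (η + d) - (1 + K * d) * t + 3 * K / 2 * t ^ 2 = 0)
    (hsmallest : ∀ s : ℝ, (η + d) - (1 + K * d) * s + 3 * K / 2 * s ^ 2 = 0 → t ≤ s)
    (htR : t ≤ R)
    (xstar : X) (hxstar : xstar ∈ Metric.closedBall x₀ t ∧ f xstar = 0)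
    (x rs : ℕ → X) (hx0 : x 0 = x₀) (hrs : ∀ k, ‖rs k‖ ≤ d)
    (hrec : ∀ k, ∀ ek : X ≃L[ℝ] Y, (ek : X →L[ℝ] Y) = f' (x k) →
      x (k + 1) = x k - ek.symm (f (x k)) + rs k)
    (hr0 : Filter.Tendsto (fun k => ‖rs k‖) Filter.atTop (nhds 0)) :
    Filter.Tendsto x Filter.atTop (nhds xstar) :=
  stmt_12_general U f f' hf x₀ R hball e₀ he₀ η K d hη hK hKd hη₀ hLip t hroot hsmallest htR xstar
    hxstar x rs hx0 hrs hrec hr0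
end

section
/- Let X, Y be Banach spaces, f : U → Y differentiable, x₀ ∈ U, ν > 0 with λ(Df(x₀)) ≥ ν (so Df(x₀) is invertible and ‖Df(x₀)⁻¹‖ ≤ ν⁻¹), and K a Lipschitz constant for Df on B̄(x₀, r) with Kr ≤ ν(1 − 1/√3). Then for every z ∈ B̄(x₀, r), λ(Df(z)) ≥ ν/√3 > 0; in particular Df(z) is invertible with ‖Df(z)⁻¹‖ ≤ √3/ν. -/
open scoped Classical in
/-- The bijectivity modulus of a bounded linear operator: `‖F⁻¹‖⁻¹` if `F` is
invertible with bounded inverse, and `0` otherwise. -/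
noncomputable def bijMod {X Y : Type*} [NormedAddCommGroup X] [NormedSpace ℝ X]
    [NormedAddCommGroup Y] [NormedSpace ℝ Y] (F : X →L[ℝ] Y) : ℝ :=
  if h : ∃ e : X ≃L[ℝ] Y, (e : X →L[ℝ] Y) = F then
    ‖(h.choose.symm : Y →L[ℝ] X)‖⁻¹
  else 0

lemma bijMod_eq_of_equiv {X Y : Type*} [NormedAddCommGroup X] [NormedSpace ℝ X]
    [NormedAddCommGroup Y] [NormedSpace ℝ Y] (e : X ≃L[ℝ] Y) (F : X →L[ℝ] Y)
    (hF : (e : X →L[ℝ] Y) = F) :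
    bijMod F = ‖(e.symm : Y →L[ℝ] X)‖⁻¹ := by
  have h : ∃ e' : X ≃L[ℝ] Y, (e' : X →L[ℝ] Y) = F := ⟨e, hF⟩
  rw [bijMod, dif_pos h]
  have : h.choose = e := by
    apply ContinuousLinearEquiv.coe_injective
    rw [h.choose_spec, hF]
  rw [this]

lemma exists_equiv_near {X Y : Type*} [NormedAddCommGroup X] [NormedSpace ℝ X]
    [CompleteSpace X] [NormedAddCommGroup Y] [NormedSpace ℝ Y]
    (e : X ≃L[ℝ] Y) (G : X →L[ℝ] Y)
    (h : ‖(e.symm : Y →L[ℝ] X)‖ * ‖G - (e : X →L[ℝ] Y)‖ < 1) :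
    ∃ e' : X ≃L[ℝ] Y, (e' : X →L[ℝ] Y) = G ∧
      ‖(e'.symm : Y →L[ℝ] X)‖ * (1 - ‖(e.symm : Y →L[ℝ] X)‖ * ‖G - (e : X →L[ℝ] Y)‖)
        ≤ ‖(e.symm : Y →L[ℝ] X)‖ := by
  set t : X →L[ℝ] X := (e.symm : Y →L[ℝ] X).comp (G - (e : X →L[ℝ] Y)) with ht
  have htn : ‖t‖ ≤ ‖(e.symm : Y →L[ℝ] X)‖ * ‖G - (e : X →L[ℝ] Y)‖ :=
    ContinuousLinearMap.opNorm_comp_le _ _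
  have hs : ‖-t‖ < 1 := by rw [norm_neg]; exact lt_of_le_of_lt htn h
  set u : (X →L[ℝ] X)ˣ := Units.oneSub (-t) hs with hu
  set w : X ≃L[ℝ] X := ContinuousLinearEquiv.ofUnit u with hw
  have hwcoe : (w : X →L[ℝ] X) = 1 + t := by
    ext y
    show (u : X →L[ℝ] X) y = _
    rw [hu]
    simp [Units.oneSub]
  refine ⟨w.trans e, ?_, ?_⟩
  · ext x
    show e (w x) = G x
    have hwx : w x = x + t x := by
      have := congrArg (fun (m : X →L[ℝ] X) => m x) hwcoe
      simpa using this
    rw [hwx, map_add, ht]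
    simp only [ContinuousLinearMap.coe_comp', Function.comp_apply,
      ContinuousLinearMap.sub_apply, ContinuousLinearEquiv.coe_coe, map_sub,
      ContinuousLinearEquiv.apply_symm_apply]
    abel
  · have hsymm : ((w.trans e).symm : Y →L[ℝ] X)
        = ((↑(u⁻¹) : X →L[ℝ] X)).comp (e.symm : Y →L[ℝ] X) := by
      ext y; rfl
    have hinv : (↑(u⁻¹) : X →L[ℝ] X) = ∑' n : ℕ, (-t) ^ n := rfl
    have h1 : (0:ℝ) ≤ ‖t‖ := norm_nonneg _
    have h2 : ‖t‖ < 1 := by rwa [norm_neg] at hs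
    have hsum : Summable fun n : ℕ => ‖t‖ ^ n := summable_geometric_of_lt_one h1 h2
    have key : ∀ n : ℕ, ‖(-t) ^ n‖ ≤ ‖t‖ ^ n := by
      intro n
      induction n with
      | zero =>
        simp only [pow_zero]
        rw [ContinuousLinearMap.one_def]
        exact ContinuousLinearMap.norm_id_le
      | succ n ih =>
        rw [pow_succ, pow_succ]
        refine (norm_mul_le _ _).trans ?_
        exact mul_le_mul ih (by rw [norm_neg]) (norm_nonneg _) (pow_nonneg (norm_nonneg _) _)
    have hsum2 : Summable fun n : ℕ => ‖(-t) ^ n‖ :=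
      hsum.of_nonneg_of_le (fun n => norm_nonneg _) key
    have hnorm_inv : ‖(↑(u⁻¹) : X →L[ℝ] X)‖ ≤ (1 - ‖t‖)⁻¹ := by
      rw [hinv]
      calc ‖∑' n : ℕ, (-t) ^ n‖ ≤ ∑' n : ℕ, ‖(-t) ^ n‖ := norm_tsum_le_tsum_norm hsum2
        _ ≤ ∑' n : ℕ, ‖t‖ ^ n := by
            exact Summable.tsum_le_tsum key hsum2 hsum
        _ = (1 - ‖t‖)⁻¹ := tsum_geometric_of_lt_one h1 h2
    have hstep : ‖((w.trans e).symm : Y →L[ℝ] X)‖ ≤ (1 - ‖t‖)⁻¹ * ‖(e.symm : Y →L[ℝ] X)‖ := by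
      rw [hsymm]
      exact (ContinuousLinearMap.opNorm_comp_le _ _).trans
        (mul_le_mul_of_nonneg_right hnorm_inv (norm_nonneg _))
    set a := ‖(e.symm : Y →L[ℝ] X)‖
    set δ := ‖G - (e : X →L[ℝ] Y)‖
    have h3 : (0:ℝ) < 1 - ‖t‖ := by linarith
    have h4 : 1 - a * δ ≤ 1 - ‖t‖ := by linarith
    calc ‖((w.trans e).symm : Y →L[ℝ] X)‖ * (1 - a * δ)
        ≤ ((1 - ‖t‖)⁻¹ * a) * (1 - ‖t‖) := by
          apply mul_le_mul hstep h4 ?_ ?_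
          · linarith
          · positivity
      _ = a := by field_simp

theorem stmt_16
    {X Y : Type*} [NormedAddCommGroup X] [NormedSpace ℝ X] [CompleteSpace X]
    [NormedAddCommGroup Y] [NormedSpace ℝ Y] [CompleteSpace Y]
    (U : Set X) (hU : IsOpen U) (f : X → Y) (f' : X → (X →L[ℝ] Y))
    (hf : ∀ x ∈ U, HasFDerivAt f (f' x) x)
    (x₀ : X) (hx₀ : x₀ ∈ U) (r K ν : ℝ) (hr : 0 < r) (hK : 0 < K) (hν : 0 < ν)
    (hball : Metric.closedBall x₀ r ⊆ U)
    (hmod : ν ≤ bijMod (f' x₀))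
    (hLip : ∀ x ∈ Metric.closedBall x₀ r, ∀ y ∈ Metric.closedBall x₀ r,
      ‖f' x - f' y‖ ≤ K * ‖x - y‖)
    (hKr : K * r ≤ ν * (1 - 1 / Real.sqrt 3)) :
    ∀ z ∈ Metric.closedBall x₀ r,
      ν / Real.sqrt 3 ≤ bijMod (f' z) ∧ 0 < ν / Real.sqrt 3 ∧
      ∃ ez : X ≃L[ℝ] Y, (ez : X →L[ℝ] Y) = f' z ∧
        ‖(ez.symm : Y →L[ℝ] X)‖ ≤ Real.sqrt 3 / ν := by
  have hs3 : (0:ℝ) < Real.sqrt 3 := Real.sqrt_pos.2 (by norm_num)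
  have hs3' : 1 < Real.sqrt 3 := by
    rw [show (1:ℝ) = Real.sqrt 1 from Real.sqrt_one.symm]
    exact Real.sqrt_lt_sqrt (by norm_num) (by norm_num)
  have hinv3 : 0 < 1 / Real.sqrt 3 := by positivity
  have hpos : (0:ℝ) < bijMod (f' x₀) := lt_of_lt_of_le hν hmod
  have hex : ∃ e : X ≃L[ℝ] Y, (e : X →L[ℝ] Y) = f' x₀ := by
    by_contra hne
    rw [bijMod, dif_neg hne] at hpos
    exact lt_irrefl 0 hpos
  obtain ⟨e₀, he₀⟩ := hex
  have hmod' : ν ≤ ‖(e₀.symm : Y →L[ℝ] X)‖⁻¹ := by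
    rwa [bijMod_eq_of_equiv e₀ _ he₀] at hmod
  set a := ‖(e₀.symm : Y →L[ℝ] X)‖ with ha_def
  have ha0 : 0 < a := by
    rcases eq_or_lt_of_le (norm_nonneg (e₀.symm : Y →L[ℝ] X)) with h | h
    · exfalso
      rw [ha_def, ← h, inv_zero] at hmod'
      linarith
    · exact h
  have ha : a ≤ ν⁻¹ := by
    have := inv_anti₀ hν hmod'
    rwa [inv_inv] at this
  -- nontrivial X
  have hne0 : (e₀.symm : Y →L[ℝ] X) ≠ 0 := by
    intro h; rw [ha_def, h, norm_zero] at ha0; exact lt_irrefl _ ha0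
  have hexy : ∃ y : Y, (e₀.symm : Y →L[ℝ] X) y ≠ 0 := by
    by_contra h; push_neg at h
    exact hne0 (ContinuousLinearMap.ext fun y => by simpa using h y)
  obtain ⟨y₀, hy₀⟩ := hexy
  have : Nontrivial X := ⟨⟨(e₀.symm : Y →L[ℝ] X) y₀, 0, hy₀⟩⟩
  intro z hz
  have hz' : ‖z - x₀‖ ≤ r := by rwa [Metric.mem_closedBall, dist_eq_norm] at hz
  have hδ : ‖f' z - (e₀ : X →L[ℝ] Y)‖ ≤ ν * (1 - 1 / Real.sqrt 3) := by
    rw [he₀]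
    refine (hLip z hz x₀ (Metric.mem_closedBall_self hr.le)).trans ?_
    exact (mul_le_mul_of_nonneg_left hz' hK.le).trans hKr
  set δ := ‖f' z - (e₀ : X →L[ℝ] Y)‖ with hδ_def
  have hδ0 : 0 ≤ δ := norm_nonneg _
  have haδ : a * δ ≤ 1 - 1 / Real.sqrt 3 := by
    calc a * δ ≤ ν⁻¹ * (ν * (1 - 1 / Real.sqrt 3)) :=
          mul_le_mul ha hδ hδ0 (by positivity)
      _ = 1 - 1 / Real.sqrt 3 := by field_simp
  have hlt : a * δ < 1 := by linarith
  obtain ⟨e', he', hbound⟩ := exists_equiv_near e₀ (f' z) hlt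
  have hb0 : 0 < ‖(e'.symm : Y →L[ℝ] X)‖ := e'.norm_symm_pos
  have hfin : ‖(e'.symm : Y →L[ℝ] X)‖ ≤ Real.sqrt 3 / ν := by
    have h1 : 1 / Real.sqrt 3 ≤ 1 - a * δ := by linarith
    have h2 : ‖(e'.symm : Y →L[ℝ] X)‖ * (1 / Real.sqrt 3) ≤ ν⁻¹ :=
      le_trans (mul_le_mul_of_nonneg_left h1 hb0.le) (hbound.trans ha)
    calc ‖(e'.symm : Y →L[ℝ] X)‖
        = (‖(e'.symm : Y →L[ℝ] X)‖ * (1 / Real.sqrt 3)) * Real.sqrt 3 := by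
          field_simp
      _ ≤ ν⁻¹ * Real.sqrt 3 := mul_le_mul_of_nonneg_right h2 hs3.le
      _ = Real.sqrt 3 / ν := by rw [div_eq_mul_inv, mul_comm]
  refine ⟨?_, by positivity, e', he', hfin⟩
  rw [bijMod_eq_of_equiv e' _ he']
  have := inv_anti₀ hb0 hfin
  rwa [inv_div] at this
end

section
/- Under the hypotheses of the bijectivity-modulus inexact Newton theorem (λ(Df(x₀)) ≥ ν, Lipschitz constant K for Df, g_d having smallest root t* with Kt* ≤ ν(1 − 1/√3)), for each term x_k of the inexact Newton sequence and any y ∈ U, ‖y − (x_k − Df(x_k)⁻¹f(x_k))‖ ≤ (√3/ν)·‖Df(x_k)(x_k − y) − f(x_k)‖. -/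
/-!
On the ball of radius `t` about `x₀` the derivative stays invertible: `‖f' x - f' x₀‖ ≤ K t < ν`,
so `‖(f' x)⁻¹‖ ≤ (ν - K t)⁻¹ ≤ √3 / ν`. The iterates never leave that ball. By the second-order
Taylor estimate `‖f x₀ - f x - f' x (x₀ - x)‖ ≤ K/2 ‖x - x₀‖²`, an exact Newton step from a point
of the ball lands within `(η + K t²/2) / (ν - K t) = t - d` of `x₀` (the equality says that `t` is
a root of `g_d`), and the perturbation `r_k` adds at most `d`. The error formula is then the
identity `y - (x - (f' x)⁻¹ (f x)) = (f' x)⁻¹ (f x - f' x (x - y))`.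
-/

namespace ContinuousLinearEquiv

variable {𝕜 X Y : Type*} [NontriviallyNormedField 𝕜] [NormedAddCommGroup X] [NormedSpace 𝕜 X]
  [NormedAddCommGroup Y] [NormedSpace 𝕜 Y]

theorem norm_symm_le_inv_iff (e : X ≃L[𝕜] Y) {c : ℝ} (hc : 0 < c) :
    ‖(e.symm : Y →L[𝕜] X)‖ ≤ c⁻¹ ↔ ∀ z, c * ‖z‖ ≤ ‖e z‖ := by
  constructor
  · intro h z
    rw [← le_inv_mul_iff₀ hc]
    simpa using (e.symm : Y →L[𝕜] X).le_of_opNorm_le h (e z)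
  · intro h
    refine ContinuousLinearMap.opNorm_le_bound _ (inv_nonneg.2 hc.le) fun y => ?_
    rw [le_inv_mul_iff₀ hc]
    simpa using h (e.symm y)

theorem norm_symm_le_of_norm_sub_le {e₀ e : X ≃L[𝕜] Y} {ν c : ℝ} (hc : c < ν)
    (he₀ : ‖(e₀.symm : Y →L[𝕜] X)‖ ≤ ν⁻¹) (he : ‖(e : X →L[𝕜] Y) - e₀‖ ≤ c) :
    ‖(e.symm : Y →L[𝕜] X)‖ ≤ (ν - c)⁻¹ := by
  have hν : 0 < ν := (norm_nonneg _).trans_lt (he.trans_lt hc)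
  rw [norm_symm_le_inv_iff e (sub_pos.2 hc)]
  intro z
  have h₀ := (norm_symm_le_inv_iff e₀ hν).1 he₀ z
  have hdiff : ‖e z - e₀ z‖ ≤ c * ‖z‖ :=
    ((e : X →L[𝕜] Y) - e₀).le_of_opNorm_le he z
  have htri := norm_sub_norm_le (e₀ z) (e z)
  rw [norm_sub_rev] at htri
  linarith

theorem exists_coe_eq_of_norm_mul_lt_one [CompleteSpace X] (e : X ≃L[𝕜] Y) {B : X →L[𝕜] Y}
    (hB : ‖(e.symm : Y →L[𝕜] X)‖ * ‖B - (e : X →L[𝕜] Y)‖ < 1) :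
    ∃ e' : X ≃L[𝕜] Y, (e' : X →L[𝕜] Y) = B := by
  set u : X →L[𝕜] X := (e.symm : Y →L[𝕜] X).comp B
  have hu : ‖1 - u‖ < 1 := by
    have : 1 - u = -(e.symm : Y →L[𝕜] X).comp (B - (e : X →L[𝕜] Y)) := by ext z; simp [u]
    rw [this, norm_neg]
    exact (ContinuousLinearMap.opNorm_comp_le _ _).trans_lt hB
  obtain ⟨w, hw⟩ := isUnit_one_sub_of_norm_lt_one hu
  refine ⟨(unitsEquiv 𝕜 X w).trans e, ?_⟩
  ext z
  simp [hw, u]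

theorem sub_sub_symm_apply (e : X ≃L[𝕜] Y) (x y : X) (v : Y) :
    y - (x - e.symm v) = e.symm (v - e (x - y)) := by
  rw [map_sub, symm_apply_apply]
  abel

theorem norm_sub_sub_symm_apply_le (e : X ≃L[𝕜] Y) (x y : X) (v : Y) :
    ‖y - (x - e.symm v)‖ ≤ ‖(e.symm : Y →L[𝕜] X)‖ * ‖e (x - y) - v‖ := by
  rw [sub_sub_symm_apply, norm_sub_rev]
  exact (e.symm : Y →L[𝕜] X).le_opNorm _

theorem exists_coe_eq_norm_symm_le_of_norm_sub_le [CompleteSpace X] (e₀ : X ≃L[𝕜] Y)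
    {B : X →L[𝕜] Y} {ν c : ℝ} (hc : c < ν) (he₀ : ‖(e₀.symm : Y →L[𝕜] X)‖ ≤ ν⁻¹)
    (hB : ‖B - (e₀ : X →L[𝕜] Y)‖ ≤ c) :
    ∃ e : X ≃L[𝕜] Y, (e : X →L[𝕜] Y) = B ∧ ‖(e.symm : Y →L[𝕜] X)‖ ≤ (ν - c)⁻¹ := by
  have hν : 0 < ν := (norm_nonneg _).trans_lt (hB.trans_lt hc)
  obtain ⟨e, he⟩ := e₀.exists_coe_eq_of_norm_mul_lt_one <| calc
    ‖(e₀.symm : Y →L[𝕜] X)‖ * ‖B - (e₀ : X →L[𝕜] Y)‖ ≤ ν⁻¹ * c := by gcongr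
    _ < 1 := by rwa [inv_mul_lt_one₀ hν]
  exact ⟨e, he, norm_symm_le_of_norm_sub_le hc he₀ (he ▸ hB)⟩

end ContinuousLinearEquiv

open Set in
theorem Convex.norm_sub_sub_fderiv_le_of_lipschitz {E F : Type*} [NormedAddCommGroup E]
    [NormedSpace ℝ E] [NormedAddCommGroup F] [NormedSpace ℝ F] {f : E → F} {f' : E → E →L[ℝ] F}
    {s : Set E} (hs : Convex ℝ s) (hf : ∀ x ∈ s, HasFDerivAt f (f' x) x) {K : ℝ}
    (hLip : ∀ x ∈ s, ∀ y ∈ s, ‖f' x - f' y‖ ≤ K * ‖x - y‖) {a b : E} (ha : a ∈ s) (hb : b ∈ s) :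
    ‖f b - f a - f' a (b - a)‖ ≤ K / 2 * ‖b - a‖ ^ 2 := by
  set Δ := b - a
  have hseg : ∀ τ ∈ Icc (0 : ℝ) 1, a + τ • Δ ∈ s := fun τ hτ => hs.add_smul_sub_mem ha hb hτ
  -- The Taylor remainder `φ` along the segment has derivative `≤ K ‖Δ‖² τ`; comparing `φ` with
  -- the antiderivative `K/2 ‖Δ‖² τ²` gives the factor `1/2`.
  set φ : ℝ → F := fun τ => f (a + τ • Δ) - f a - τ • f' a Δ
  have hφ : ∀ τ ∈ Icc (0 : ℝ) 1, HasDerivAt φ (f' (a + τ • Δ) Δ - f' a Δ) τ := by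
    intro τ hτ
    have hline : HasDerivAt (fun τ : ℝ => a + τ • Δ) Δ τ := by
      simpa using ((hasDerivAt_id τ).smul_const Δ).const_add a
    have h := (((hf _ (hseg τ hτ)).comp_hasDerivAt τ hline).sub_const (f a)).sub
      ((hasDerivAt_id τ).smul_const (f' a Δ))
    rw [one_smul] at h
    exact h
  have hbound : ∀ τ ∈ Ico (0 : ℝ) 1, ‖f' (a + τ • Δ) Δ - f' a Δ‖ ≤ K * ‖Δ‖ ^ 2 * τ := by
    intro τ hτ
    have hτ' : τ ∈ Icc (0 : ℝ) 1 := Ico_subset_Icc_self hτ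
    calc ‖f' (a + τ • Δ) Δ - f' a Δ‖ = ‖(f' (a + τ • Δ) - f' a) Δ‖ := rfl
      _ ≤ ‖f' (a + τ • Δ) - f' a‖ * ‖Δ‖ := ContinuousLinearMap.le_opNorm _ _
      _ ≤ K * ‖a + τ • Δ - a‖ * ‖Δ‖ := by gcongr; exact hLip _ (hseg τ hτ') _ ha
      _ = K * ‖Δ‖ ^ 2 * τ := by
        rw [add_sub_cancel_left, norm_smul, Real.norm_of_nonneg hτ.1]; ring
  have hB : ∀ τ, HasDerivAt (fun τ : ℝ => K / 2 * ‖Δ‖ ^ 2 * τ ^ 2) (K * ‖Δ‖ ^ 2 * τ) τ :=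
    fun τ => ((hasDerivAt_pow 2 τ).const_mul (K / 2 * ‖Δ‖ ^ 2)).congr_deriv (by push_cast; ring)
  have := image_norm_le_of_norm_deriv_right_le_deriv_boundary
    (fun τ hτ => (hφ τ hτ).continuousAt.continuousWithinAt)
    (fun τ hτ => (hφ τ (Ico_subset_Icc_self hτ)).hasDerivWithinAt) (by simp [φ]) hB hbound
    (right_mem_Icc.2 zero_le_one)
  simpa [φ, Δ] using this

theorem exists_coe_eq_norm_symm_le_of_le_bijMod {X Y : Type*} [NormedAddCommGroup X]
    [NormedSpace ℝ X] [NormedAddCommGroup Y] [NormedSpace ℝ Y] {F : X →L[ℝ] Y} {ν : ℝ}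
    (hν : 0 < ν) (h : ν ≤ bijMod F) :
    ∃ e : X ≃L[ℝ] Y, (e : X →L[ℝ] Y) = F ∧ ‖(e.symm : Y →L[ℝ] X)‖ ≤ ν⁻¹ := by
  unfold bijMod at h
  split_ifs at h with hF
  · have hpos : 0 < ‖(hF.choose.symm : Y →L[ℝ] X)‖ := inv_pos.1 (hν.trans_le h)
    exact ⟨hF.choose, hF.choose_spec, (le_inv_comm₀ hν hpos).1 h⟩
  · exact absurd h hν.not_ge

section InexactNewton

open Metric

variable {X Y : Type*} [NormedAddCommGroup X] [NormedSpace ℝ X] [NormedAddCommGroup Y]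
  [NormedSpace ℝ Y] {f : X → Y} {f' : X → X →L[ℝ] Y} {x₀ : X} {η K ν d t : ℝ}

theorem exists_coe_eq_fderiv_norm_symm_le [CompleteSpace X]
    (hLip : ∀ x ∈ closedBall x₀ t, ∀ y ∈ closedBall x₀ t, ‖f' x - f' y‖ ≤ K * ‖x - y‖)
    (hK : 0 ≤ K) (hKt : K * t < ν) (e₀ : X ≃L[ℝ] Y) (he₀ : (e₀ : X →L[ℝ] Y) = f' x₀)
    (he₀' : ‖(e₀.symm : Y →L[ℝ] X)‖ ≤ ν⁻¹) {x : X} (hx : x ∈ closedBall x₀ t) :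
    ∃ e : X ≃L[ℝ] Y, (e : X →L[ℝ] Y) = f' x ∧ ‖(e.symm : Y →L[ℝ] X)‖ ≤ (ν - K * t)⁻¹ := by
  refine e₀.exists_coe_eq_norm_symm_le_of_norm_sub_le hKt he₀' ?_
  rw [he₀]
  have hx₀ : x₀ ∈ closedBall x₀ t := mem_closedBall_self (dist_nonneg.trans hx)
  calc ‖f' x - f' x₀‖ ≤ K * ‖x - x₀‖ := hLip x hx x₀ hx₀
    _ ≤ K * t := by gcongr; rwa [← dist_eq_norm]

theorem inexactNewton_step_mem_closedBall
    (hf : ∀ x ∈ closedBall x₀ t, HasFDerivAt f (f' x) x)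
    (hLip : ∀ x ∈ closedBall x₀ t, ∀ y ∈ closedBall x₀ t, ‖f' x - f' y‖ ≤ K * ‖x - y‖)
    (hK : 0 ≤ K) (hKt : K * t < ν) (hfx₀ : ‖f x₀‖ ≤ η)
    (hroot : η + K / 2 * t ^ 2 ≤ (t - d) * (ν - K * t))
    {x : X} (hx : x ∈ closedBall x₀ t) (e : X ≃L[ℝ] Y) (he : (e : X →L[ℝ] Y) = f' x)
    (he' : ‖(e.symm : Y →L[ℝ] X)‖ ≤ (ν - K * t)⁻¹) {r : X} (hr : ‖r‖ ≤ d) :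
    x - e.symm (f x) + r ∈ closedBall x₀ t := by
  have hx₀ : x₀ ∈ closedBall x₀ t := mem_closedBall_self (dist_nonneg.trans hx)
  have hxt : ‖x₀ - x‖ ≤ t := by rw [← dist_eq_norm, dist_comm]; exact hx
  have hpos : 0 < ν - K * t := sub_pos.2 hKt
  have hres : ‖e (x - x₀) - f x‖ ≤ η + K / 2 * t ^ 2 := by
    have htaylor := (convex_closedBall x₀ t).norm_sub_sub_fderiv_le_of_lipschitz hf hLip hx hx₀
    have : e (x - x₀) - f x = (f x₀ - f x - f' x (x₀ - x)) - f x₀ := by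
      rw [← he, ContinuousLinearEquiv.coe_coe, ← neg_sub x, map_neg]; abel
    rw [this]
    calc _ ≤ ‖f x₀ - f x - f' x (x₀ - x)‖ + ‖f x₀‖ := norm_sub_le _ _
      _ ≤ K / 2 * ‖x₀ - x‖ ^ 2 + η := add_le_add htaylor hfx₀
      _ ≤ η + K / 2 * t ^ 2 := by rw [add_comm]; gcongr
  have hnewton : ‖x - e.symm (f x) - x₀‖ ≤ t - d := by
    rw [norm_sub_rev]
    calc _ ≤ ‖(e.symm : Y →L[ℝ] X)‖ * ‖e (x - x₀) - f x‖ := e.norm_sub_sub_symm_apply_le _ _ _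
      _ ≤ (ν - K * t)⁻¹ * (η + K / 2 * t ^ 2) := by gcongr
      _ ≤ t - d := by rw [inv_mul_le_iff₀ hpos]; linarith
  rw [mem_closedBall, dist_eq_norm, add_sub_right_comm]
  calc _ ≤ ‖x - e.symm (f x) - x₀‖ + ‖r‖ := norm_add_le _ _
    _ ≤ t := by linarith

theorem inexactNewton_mem_closedBall [CompleteSpace X]
    (hf : ∀ x ∈ closedBall x₀ t, HasFDerivAt f (f' x) x)
    (hLip : ∀ x ∈ closedBall x₀ t, ∀ y ∈ closedBall x₀ t, ‖f' x - f' y‖ ≤ K * ‖x - y‖)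
    (hK : 0 ≤ K) (hKt : K * t < ν) (hfx₀ : ‖f x₀‖ ≤ η)
    (hroot : η + K / 2 * t ^ 2 ≤ (t - d) * (ν - K * t)) (ht : 0 ≤ t)
    (e₀ : X ≃L[ℝ] Y) (he₀ : (e₀ : X →L[ℝ] Y) = f' x₀) (he₀' : ‖(e₀.symm : Y →L[ℝ] X)‖ ≤ ν⁻¹)
    {x rs : ℕ → X} (hx0 : x 0 = x₀) (hrs : ∀ k, ‖rs k‖ ≤ d)
    (hrec : ∀ k, ∀ ek : X ≃L[ℝ] Y, (ek : X →L[ℝ] Y) = f' (x k) →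
      x (k + 1) = x k - ek.symm (f (x k)) + rs k) :
    ∀ k, x k ∈ closedBall x₀ t
  | 0 => hx0 ▸ mem_closedBall_self ht
  | k + 1 => by
    have hxk :=
      inexactNewton_mem_closedBall hf hLip hK hKt hfx₀ hroot ht e₀ he₀ he₀' hx0 hrs hrec k
    obtain ⟨e, he, he'⟩ := exists_coe_eq_fderiv_norm_symm_le hLip hK hKt e₀ he₀ he₀' hxk
    rw [hrec k e he]
    exact inexactNewton_step_mem_closedBall hf hLip hK hKt hfx₀ hroot hxk e he he' (hrs k)

end InexactNewton

theorem stmt_18_general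
    {X Y : Type*} [NormedAddCommGroup X] [NormedSpace ℝ X] [CompleteSpace X]
    [NormedAddCommGroup Y] [NormedSpace ℝ Y]
    (U : Set X) (f : X → Y) (f' : X → (X →L[ℝ] Y))
    (hf : ∀ x ∈ U, HasFDerivAt f (f' x) x)
    (x₀ : X) (R : ℝ)
    (hball : Metric.closedBall x₀ R ⊆ U)
    (η K ν d : ℝ) (hη : 0 ≤ η) (hK : 0 < K) (hν : 0 < ν)
    (hd : 0 < d)
    (hfx₀ : ‖f x₀‖ ≤ η) (hmod : ν ≤ bijMod (f' x₀))
    (hLip : ∀ x ∈ Metric.closedBall x₀ R, ∀ y ∈ Metric.closedBall x₀ R,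
      ‖f' x - f' y‖ ≤ K * ‖x - y‖)
    (t : ℝ)
    (hroot : (η + ν * d) - (ν + K * d) * t + 3 * K / 2 * t ^ 2 = 0)
    (htR : t ≤ R)
    (hKt : K * t ≤ ν * (1 - 1 / Real.sqrt 3))
    (x rs : ℕ → X) (hx0 : x 0 = x₀) (hrs : ∀ k, ‖rs k‖ ≤ d)
    (hrec : ∀ k, ∀ ek : X ≃L[ℝ] Y, (ek : X →L[ℝ] Y) = f' (x k) →
      x (k + 1) = x k - ek.symm (f (x k)) + rs k) :
    ∀ k, ∀ ek : X ≃L[ℝ] Y, (ek : X →L[ℝ] Y) = f' (x k) →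
      ∀ y ∈ U, ‖y - (x k - ek.symm (f (x k)))‖ ≤
        Real.sqrt 3 / ν * ‖f' (x k) (x k - y) - f (x k)‖ := by
  intro k ek hek y _
  have ht : 0 ≤ t := by
    -- for `t < 0` every term of `g_d(t)` is nonnegative and `ν d > 0`
    by_contra! ht
    nlinarith [mul_pos hν hd, mul_pos (add_pos hν (mul_pos hK hd)) (neg_pos.2 ht), sq_nonneg t]
  have hνKt : ν / Real.sqrt 3 ≤ ν - K * t := by
    have : ν * (1 - 1 / Real.sqrt 3) = ν - ν / Real.sqrt 3 := by ring
    linarith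
  have hKtν : K * t < ν := by
    have : 0 < ν / Real.sqrt 3 := by positivity
    linarith
  have hsub : Metric.closedBall x₀ t ⊆ Metric.closedBall x₀ R :=
    Metric.closedBall_subset_closedBall htR
  have hLip' : ∀ x ∈ Metric.closedBall x₀ t, ∀ y ∈ Metric.closedBall x₀ t,
      ‖f' x - f' y‖ ≤ K * ‖x - y‖ := fun x hx y hy => hLip x (hsub hx) y (hsub hy)
  obtain ⟨e₀, he₀, he₀'⟩ := exists_coe_eq_norm_symm_le_of_le_bijMod hν hmod
  have hxk := inexactNewton_mem_closedBall (fun x hx => hf x (hball (hsub hx))) hLip' hK.le hKtν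
    hfx₀ (by linear_combination hroot) ht e₀ he₀ he₀' hx0 hrs hrec k
  obtain ⟨e, he, he'⟩ := exists_coe_eq_fderiv_norm_symm_le hLip' hK.le hKtν e₀ he₀ he₀' hxk
  obtain rfl : ek = e := ContinuousLinearEquiv.coe_injective (hek.trans he.symm)
  calc ‖y - (x k - ek.symm (f (x k)))‖
      ≤ ‖(ek.symm : Y →L[ℝ] X)‖ * ‖ek (x k - y) - f (x k)‖ :=
        ek.norm_sub_sub_symm_apply_le _ _ _
    _ ≤ (ν / Real.sqrt 3)⁻¹ * ‖f' (x k) (x k - y) - f (x k)‖ := by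
      rw [← he, ContinuousLinearEquiv.coe_coe]
      gcongr
      exact he'.trans (inv_anti₀ (by positivity) hνKt)
    _ = Real.sqrt 3 / ν * ‖f' (x k) (x k - y) - f (x k)‖ := by rw [inv_div]

theorem stmt_18
    {X Y : Type*} [NormedAddCommGroup X] [NormedSpace ℝ X] [CompleteSpace X]
    [NormedAddCommGroup Y] [NormedSpace ℝ Y] [CompleteSpace Y]
    (U : Set X) (hU : IsOpen U) (f : X → Y) (f' : X → (X →L[ℝ] Y))
    (hf : ∀ x ∈ U, HasFDerivAt f (f' x) x)
    (x₀ : X) (hx₀ : x₀ ∈ U) (R : ℝ) (hR : 0 < R)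
    (hball : Metric.closedBall x₀ R ⊆ U)
    (η K ν d : ℝ) (hη : 0 ≤ η) (hK : 0 < K) (hν : 0 < ν)
    (hd : 0 < d) (hdν : d ≤ ν / K)
    (hfx₀ : ‖f x₀‖ ≤ η) (hmod : ν ≤ bijMod (f' x₀))
    (hLip : ∀ x ∈ Metric.closedBall x₀ R, ∀ y ∈ Metric.closedBall x₀ R,
      ‖f' x - f' y‖ ≤ K * ‖x - y‖)
    (t : ℝ)
    (hroot : (η + ν * d) - (ν + K * d) * t + 3 * K / 2 * t ^ 2 = 0)
    (hsmallest : ∀ s : ℝ, (η + ν * d) - (ν + K * d) * s + 3 * K / 2 * s ^ 2 = 0 → t ≤ s)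
    (htR : t ≤ R)
    (hKt : K * t ≤ ν * (1 - 1 / Real.sqrt 3))
    (x rs : ℕ → X) (hx0 : x 0 = x₀) (hrs : ∀ k, ‖rs k‖ ≤ d)
    (hrec : ∀ k, ∀ ek : X ≃L[ℝ] Y, (ek : X →L[ℝ] Y) = f' (x k) →
      x (k + 1) = x k - ek.symm (f (x k)) + rs k) :
    ∀ k, ∀ ek : X ≃L[ℝ] Y, (ek : X →L[ℝ] Y) = f' (x k) →
      ∀ y ∈ U, ‖y - (x k - ek.symm (f (x k)))‖ ≤
        Real.sqrt 3 / ν * ‖f' (x k) (x k - y) - f (x k)‖ :=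
  stmt_18_general U f f' hf x₀ R hball η K ν d hη hK hν hd hfx₀ hmod hLip t hroot htR hKt x rs hx0
    hrs hrec
end
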